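/- arXiv:1111.4722 — 6 statements merged into one kernel-verified Lean document; each statement's English description precedes it below -/
import Mathlib

section
/- Let n ≥ 5 and fix a pair of indices i ≠ j in {1,…,n}. Suppose the parameter collection c satisfies: (C1) c_i^{kj} c_j^{li} ≠ c_j^{ki} c_i^{lj} for all k ≠ l with k,l ∉ {i,j}; and (C2) for every p ∉ {i,j} there exist k < l < m with k,l,m ∉ {i,j} such that for each I ∈ {i,j}, c_p^{kI}(c_i^{lj}c_j^{mi} − c_j^{li}c_i^{mj}) + c_p^{lI}(c_j^{ki}c_i^{mj} − c_i^{kj}c_j^{mi}) + c_p^{mI}(c_i^{kj}c_j^{li} − c_j^{ki}c_i^{lj}) ≠ 0. Then there exists T > 0 such that for every t ∈ (0,T) the singular part Σ_sing(tc) is nonempty, i.e., there exists ξ ∈ ℝ^n \ {0} with rank P(ξ,tc) ≤ n−2; in particular the characteristic variety Σ(tc) is not smooth in ℝ^n \ {0}. -/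
/-!
At `t = 0` the symbol is `diag ξ`, whose rank drops by two at every covector `η` with
`η_i = η_j = 0` and all other coordinates nonzero. Since `P(ξ, tc) = t P(ξ, c) + (1 - t) diag ξ`,
we look for `ξ` near such an `η` together with two kernel vectors `e_i + t a` and `e_j + t b`.
After division by `t`, the kernel equations form a square polynomial system in the unknowns
`(a, b)`, depending on the parameter `t`. If `η` also annihilates the two linear forms
`ξ ↦ Σ_k ξ_k c_j^{ki}` and `ξ ↦ Σ_k ξ_k c_i^{kj}`, the system is solvable at `t = 0`, and (C1) for
a pair `q, r` outside `{i, j}` makes its partial derivative there invertible; the implicit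
function theorem then solves it for all small `t`. Such an `η` exists: for each `p ∉ {i, j}`, the
cross product of the two forms restricted to `p` and two further indices has a nonzero
`p`-coordinate by (C1), and over an infinite field a subspace with, for each `p`, a vector whose
`p`-coordinate is nonzero has a vector with all these coordinates nonzero.
-/

open Matrix

/-- A parameter collection: `c i k j` denotes `c_i^{kj}`, symmetric in the two
superscripts, with normalizations `c_i^{ii} = 1` and `c_i^{jj} = 0` for `i ≠ j`. -/
def IsParamColl (n : ℕ) (c : Fin n → Fin n → Fin n → ℝ) : Prop :=
  (∀ i j k : Fin n, j ≠ k → c i k j = c i j k) ∧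
  (∀ i : Fin n, c i i i = 1) ∧
  (∀ i j : Fin n, i ≠ j → c i j j = 0)

/-- The principal symbol `P(ξ, c) = Σ_k ξ_k A^k`, where `(A^k)_{ij} = c_i^{kj}`. -/
def pSymb {n : ℕ} (ξ : Fin n → ℝ) (c : Fin n → Fin n → Fin n → ℝ) :
    Matrix (Fin n) (Fin n) ℝ :=
  Matrix.of fun i j => ∑ k, ξ k * c i k j

/-- The scaled parameter collection `t • c` (normalized entries unchanged). -/
def pScale {n : ℕ} (t : ℝ) (c : Fin n → Fin n → Fin n → ℝ) :
    Fin n → Fin n → Fin n → ℝ :=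
  fun i k j => if k = j then c i k j else t * c i k j

open Topology

theorem IsParamColl.diag_eq {n : ℕ} {c : Fin n → Fin n → Fin n → ℝ} (hc : IsParamColl n c)
    (m b : Fin n) : c m b b = if m = b then 1 else 0 := by
  split_ifs with h
  · subst h
    exact hc.2.1 m
  · exact hc.2.2 m b h

theorem pSymb_pScale {n : ℕ} {c : Fin n → Fin n → Fin n → ℝ}
    (hdiag : ∀ m b, c m b b = if m = b then 1 else 0) (ξ : Fin n → ℝ) (t : ℝ) :
    pSymb ξ (pScale t c) = t • pSymb ξ c + (1 - t) • diagonal ξ := by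
  ext m b
  have hsplit : ∀ k, ξ k * pScale t c m k b
      = t * (ξ k * c m k b) + if k = b then (1 - t) * (ξ k * c m k b) else 0 := by
    intro k
    by_cases h : k = b <;> simp only [pScale, h, ↓reduceIte, add_zero] <;> ring
  simp only [pSymb, of_apply, hsplit, Finset.sum_add_distrib, ← Finset.mul_sum,
    Finset.sum_ite_eq', Finset.mem_univ, if_true, hdiag, Matrix.add_apply, Matrix.smul_apply,
    smul_eq_mul, diagonal_apply]
  split_ifs <;> simp_all

theorem Matrix.rank_le_card_sub_two {m ι K : Type*} [Fintype m] [Fintype ι] [Field K]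
    (A : Matrix m ι K) {v w : ι → K} (hv : A *ᵥ v = 0) (hw : A *ᵥ w = 0)
    (hvw : LinearIndependent K ![v, w]) : A.rank ≤ Fintype.card ι - 2 := by
  have hker : 2 ≤ Module.finrank K (LinearMap.ker A.mulVecLin) := by
    have hspan : Submodule.span K (Set.range ![v, w]) ≤ LinearMap.ker A.mulVecLin := by
      rw [Submodule.span_le, Set.range_subset_iff]
      intro k
      fin_cases k <;> simpa
    simpa [finrank_span_eq_card hvw] using Submodule.finrank_mono hspan
  have := LinearMap.finrank_range_add_finrank_ker A.mulVecLin
  rw [Module.finrank_fintype_fun_eq_card] at this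
  rw [Matrix.rank]
  omega

theorem Finset.exists_ne_notMem_notMem {α : Type*} [Fintype α] [DecidableEq α] (s : Finset α)
    (h : s.card + 2 ≤ Fintype.card α) : ∃ q r, q ≠ r ∧ q ∉ s ∧ r ∉ s := by
  obtain ⟨q, hq, r, hr, hqr⟩ := Finset.one_lt_card.1
    (show 1 < sᶜ.card by rw [Finset.card_compl]; omega)
  exact ⟨q, r, hqr, Finset.mem_compl.1 hq, Finset.mem_compl.1 hr⟩

theorem exists_mulVec_eq_zero_forall_ne_zero {m ι K : Type*} [Fintype m] [Fintype ι] [Field K]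
    [Infinite K] (M : Matrix m ι K) (s : Set ι) (h : ∀ p ∈ s, ∃ w, M *ᵥ w = 0 ∧ w p ≠ 0) :
    ∃ η, M *ᵥ η = 0 ∧ ∀ p ∈ s, η p ≠ 0 := by
  obtain ⟨η, hη, hne⟩ := Module.Dual.exists_forall_mem_ne_zero_of_forall_exists
    (LinearMap.ker M.mulVecLin) (fun p : s => LinearMap.proj p.1)
    (fun p => by simpa using h p p.2)
  exact ⟨η, hη, fun p hp => hne ⟨p, hp⟩⟩

theorem exists_dotProduct_eq_zero_apply_ne_zero {ι K : Type*} [Fintype ι] [DecidableEq ι]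
    [CommRing K] (F G : ι → K) {p q r : ι} (hpq : p ≠ q) (hpr : p ≠ r)
    (h : F q * G r ≠ F r * G q) :
    ∃ w : ι → K, F ⬝ᵥ w = 0 ∧ G ⬝ᵥ w = 0 ∧ w p ≠ 0 ∧
      ∀ k, k ≠ p → k ≠ q → k ≠ r → w k = 0 := by
  set x := ![F p, F q, F r] ⨯₃ ![G p, G q, G r]
  have hdot : ∀ H : ι → K, H ⬝ᵥ (Pi.single p (x 0) + Pi.single q (x 1) + Pi.single r (x 2))
      = ![H p, H q, H r] ⬝ᵥ x := by
    intro H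
    rw [dotProduct_add, dotProduct_add, dotProduct_single, dotProduct_single, dotProduct_single,
      dotProduct, Fin.sum_univ_three]
    rfl
  refine ⟨Pi.single p (x 0) + Pi.single q (x 1) + Pi.single r (x 2), ?_, ?_, ?_, ?_⟩
  · rw [hdot, dot_self_cross]
  · rw [hdot, dot_cross_self]
  · simpa [hpq, hpr, x, cross_apply, sub_eq_zero] using h
  · intro k hkp hkq hkr
    simp [hkp, hkq, hkr]

theorem HasStrictFDerivAt.eventually_exists_mem_apply_eq_zero {𝕜 E₁ E : Type*}
    [NontriviallyNormedField 𝕜] [CompleteSpace 𝕜]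
    [NormedAddCommGroup E₁] [NormedSpace 𝕜 E₁] [CompleteSpace E₁]
    [NormedAddCommGroup E] [NormedSpace 𝕜 E] [FiniteDimensional 𝕜 E]
    {f : E₁ × E → E} {f' : E₁ × E →L[𝕜] E} {u : E₁ × E} (hf : HasStrictFDerivAt f f' u)
    (hfu : f u = 0) (hinj : Function.Injective (f' ∘L .inr 𝕜 E₁ E)) {U : Set E}
    (hU : U ∈ 𝓝 u.2) : ∀ᶠ t in 𝓝 u.1, ∃ x ∈ U, f (t, x) = 0 := by
  have := FiniteDimensional.complete 𝕜 E
  have hinv : (f' ∘L .inr 𝕜 E₁ E).IsInvertible :=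
    ⟨(LinearEquiv.ofInjectiveEndo _ hinj).toContinuousLinearEquiv, rfl⟩
  filter_upwards [hf.eventually_apply_implicitFunctionOfProdDomain hinv,
    hf.tendsto_implicitFunctionOfProdDomain hinv hU] with t ht hU
  exact ⟨_, hU, ht.trans hfu⟩

theorem hasDerivAt_add_smul_add_sq_smul {F : Type*} [NormedAddCommGroup F] [NormedSpace ℝ F]
    (x y z : F) : HasDerivAt (fun s : ℝ => x + s • y + s ^ 2 • z) y 0 := by
  simpa using (((hasDerivAt_id (0 : ℝ)).smul_const y).const_add x).fun_add
    ((hasDerivAt_pow 2 (0 : ℝ)).smul_const z)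

@[fun_prop]
theorem ContDiff.if_const {𝕜 E F : Type*} [NontriviallyNormedField 𝕜] [NormedAddCommGroup E]
    [NormedSpace 𝕜 E] [NormedAddCommGroup F] [NormedSpace 𝕜 F] {k : WithTop ℕ∞} (p : Prop)
    [Decidable p] {f g : E → F} (hf : ContDiff 𝕜 k f) (hg : ContDiff 𝕜 k g) :
    ContDiff 𝕜 k fun x => if p then f x else g x := by
  split_ifs <;> assumption

section Ansatz

variable {n : ℕ} (c : Fin n → Fin n → Fin n → ℝ) (η : Fin n → ℝ) (i j q r : Fin n)

/- The symbol `ξ` and the kernel vectors `ansatzKernel i j t a = e_i + t a` and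
`ansatzKernel j i t b = e_j + t b` are parametrized by `(a, b)`. The kernel vectors do not use the
coordinates `a_i, a_j, b_i, b_j`; these enter `ξ` instead, as `ξ_i = t a_j`, `ξ_j = t b_i` and
the corrections `a_i e_q + b_j e_r` of `η`, so that the system below is square. -/
def ansatzSymbol (t : ℝ) (a b : Fin n → ℝ) : Fin n → ℝ := fun k =>
  if k = i then t * a j else if k = j then t * b i
  else η k + (if k = q then a i else 0) + (if k = r then b j else 0)

def ansatzKernel (t : ℝ) (a : Fin n → ℝ) : Fin n → ℝ := fun k =>
  if k = i then 1 else if k = j then 0 else t * a k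

def ansatzDefect (t : ℝ) (a b : Fin n → ℝ) : Fin n → ℝ := fun m =>
  (1 - t) * (if m = i then a j else if m = j then 0 else ansatzSymbol η i j q r t a b m * a m)
    + (pSymb (ansatzSymbol η i j q r t a b) c *ᵥ ansatzKernel i j t a) m

def ansatzSystem (p : ℝ × (Fin n → ℝ) × (Fin n → ℝ)) : (Fin n → ℝ) × (Fin n → ℝ) :=
  (ansatzDefect c η i j q r p.1 p.2.1 p.2.2, ansatzDefect c η j i r q p.1 p.2.2 p.2.1)

def ansatzDefectDeriv (a b α β : Fin n → ℝ) : Fin n → ℝ := fun m =>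
  (if m = i then α j else if m = j then 0
    else ansatzSymbol 0 i j q r 0 α β m * a m + ansatzSymbol η i j q r 0 a b m * α m)
  + ∑ k, ansatzSymbol 0 i j q r 0 α β k * c m k i

variable {c η i j q r}

theorem contDiff_ansatzSystem {k : WithTop ℕ∞} : ContDiff ℝ k (ansatzSystem c η i j q r) := by
  unfold ansatzSystem ansatzDefect ansatzSymbol ansatzKernel pSymb
  simp only [mulVec, dotProduct, of_apply]
  fun_prop

theorem ansatzSymbol_swap (hij : i ≠ j) (t : ℝ) (a b : Fin n → ℝ) :
    ansatzSymbol η j i r q t b a = ansatzSymbol η i j q r t a b := by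
  ext k
  by_cases hki : k = i
  · simp [ansatzSymbol, hki, hij]
  · by_cases hkj : k = j <;> simp [ansatzSymbol, hki, hkj, Ne.symm hij, add_right_comm]

theorem ansatzKernel_zero (a : Fin n → ℝ) : ansatzKernel i j 0 a = Pi.single i 1 := by
  ext k
  by_cases hki : k = i <;> by_cases hkj : k = j <;> simp [ansatzKernel, Pi.single_apply, hki, hkj]

theorem ansatzSymbol_add_smul (t s : ℝ) (a b α β : Fin n → ℝ) :
    ansatzSymbol η i j q r t (a + s • α) (b + s • β)
      = ansatzSymbol η i j q r t a b + s • ansatzSymbol 0 i j q r t α β := by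
  ext k
  simp only [ansatzSymbol, Pi.add_apply, Pi.smul_apply, smul_eq_mul, Pi.zero_apply]
  split_ifs <;> ring

theorem ansatzSymbol_zero (hηi : η i = 0) (hηj : η j = 0) (hqi : q ≠ i) (hqj : q ≠ j)
    (hri : r ≠ i) (hrj : r ≠ j) (a b : Fin n → ℝ) :
    ansatzSymbol η i j q r 0 a b = η + Pi.single q (a i) + Pi.single r (b j) := by
  ext k
  by_cases hki : k = i
  · subst hki; simp [ansatzSymbol, hηi, Ne.symm hqi, Ne.symm hri]
  · by_cases hkj : k = j
    · subst hkj; simp [ansatzSymbol, hηj, hki, Ne.symm hqj, Ne.symm hrj]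
    · simp [ansatzSymbol, hki, hkj, Pi.single_apply]

variable (η i j q r) in
theorem pSymb_pScale_mulVec_ansatzKernel (hdiag : ∀ m b, c m b b = if m = b then 1 else 0)
    (t : ℝ) (a b : Fin n → ℝ) :
    pSymb (ansatzSymbol η i j q r t a b) (pScale t c) *ᵥ ansatzKernel i j t a
      = t • ansatzDefect c η i j q r t a b := by
  ext m
  rw [pSymb_pScale hdiag, add_mulVec, smul_mulVec, smul_mulVec]
  simp only [Pi.add_apply, Pi.smul_apply, smul_eq_mul, mulVec_diagonal, ansatzDefect]
  by_cases hmi : m = i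
  · subst hmi
    simp only [ansatzSymbol, ↓reduceIte, ansatzKernel, mul_one]
    ring
  · by_cases hmj : m = j
    · subst hmj
      simp [hmi, ansatzKernel]
    · simp only [ansatzKernel, hmi, ↓reduceIte, hmj]
      ring

theorem rank_pSymb_pScale_le_of_ansatzSystem_eq_zero
    (hdiag : ∀ m b, c m b b = if m = b then 1 else 0) (hij : i ≠ j) {t : ℝ}
    {a b : Fin n → ℝ} (h : ansatzSystem c η i j q r (t, a, b) = 0) :
    (pSymb (ansatzSymbol η i j q r t a b) (pScale t c)).rank ≤ n - 2 := by
  have hv := pSymb_pScale_mulVec_ansatzKernel η i j q r hdiag t a b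
  have hw := pSymb_pScale_mulVec_ansatzKernel η j i r q hdiag t b a
  rw [ansatzSymbol_swap hij] at hw
  rw [ansatzSystem, Prod.mk_eq_zero] at h
  rw [h.1, smul_zero] at hv
  rw [h.2, smul_zero] at hw
  have hvw : LinearIndependent ℝ ![ansatzKernel i j t a, ansatzKernel j i t b] := by
    rw [LinearIndependent.pair_iff]
    intro x y hxy
    have hi := congrFun hxy i
    have hj := congrFun hxy j
    simp only [Pi.add_apply, Pi.smul_apply, ansatzKernel, ↓reduceIte, smul_eq_mul, mul_one, hij,
      mul_zero, add_zero, Pi.zero_apply, Ne.symm hij, zero_add] at hi hj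
    exact ⟨hi, hj⟩
  simpa using rank_le_card_sub_two _ hv hw hvw

variable (c η i j q r) in
theorem hasDerivAt_ansatzDefect_line (a b α β : Fin n → ℝ) :
    HasDerivAt (fun s : ℝ => ansatzDefect c η i j q r 0 (a + s • α) (b + s • β))
      (ansatzDefectDeriv c η i j q r a b α β) 0 := by
  set ξ := ansatzSymbol η i j q r 0 a b
  set ξ' := ansatzSymbol 0 i j q r 0 α β
  have hline : ∀ s : ℝ, ansatzDefect c η i j q r 0 (a + s • α) (b + s • β)
      = ansatzDefect c η i j q r 0 a b
        + s • (fun m => (if m = i then α j else if m = j then 0 else ξ' m * a m + ξ m * α m)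
          + ∑ k, ξ' k * c m k i)
        + s ^ 2 • fun m => if m = i then 0 else if m = j then 0 else ξ' m * α m := by
    intro s
    ext m
    simp only [ansatzDefect, ansatzSymbol_add_smul, ansatzKernel_zero, mulVec_single_one,
      pSymb, col_apply, of_apply, Pi.add_apply, Pi.smul_apply, smul_eq_mul, add_mul,
      Finset.sum_add_distrib, mul_assoc, ← Finset.mul_sum]
    split_ifs <;> ring
  rw [funext hline]
  exact hasDerivAt_add_smul_add_sq_smul _ _ _

theorem exists_ansatzDefect_zero_eq_zero (hij : i ≠ j) (hηi : η i = 0) (hηj : η j = 0)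
    (hη : ∑ k, η k * c j k i = 0) (hne : ∀ m, m ≠ i → m ≠ j → η m ≠ 0)
    (hqi : q ≠ i) (hqj : q ≠ j) (hri : r ≠ i) (hrj : r ≠ j) :
    ∃ a : Fin n → ℝ, a i = 0 ∧
      ∀ b : Fin n → ℝ, b j = 0 → ansatzDefect c η i j q r 0 a b = 0 := by
  refine ⟨fun m => if m = i then 0 else if m = j then -∑ k, η k * c i k i
    else -(∑ k, η k * c m k i) / η m, by simp, fun b hb => ?_⟩
  ext m
  simp only [ansatzDefect, ansatzSymbol_zero hηi hηj hqi hqj hri hrj, ansatzKernel_zero,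
    mulVec_single_one, pSymb, col_apply, of_apply, if_pos, hb, Pi.single_zero, add_zero]
  by_cases hmi : m = i
  · subst hmi; simp [Ne.symm hij]
  · by_cases hmj : m = j
    · subst hmj; simpa [hmi] using hη
    · simp only [sub_zero, hmi, ↓reduceIte, hmj, one_mul, Pi.zero_apply]
      field_simp [hne m hmi hmj]
      ring

theorem eq_zero_of_ansatzDefectDeriv_eq_zero (hij : i ≠ j)
    (hne : ∀ m, m ≠ i → m ≠ j → η m ≠ 0) (hqi : q ≠ i) (hqj : q ≠ j) (hri : r ≠ i)
    (hrj : r ≠ j) (hdet : c i q j * c j r i ≠ c j q i * c i r j) {a b α β : Fin n → ℝ}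
    (ha : a i = 0) (hb : b j = 0) (hv : ansatzDefectDeriv c η i j q r a b α β = 0)
    (hw : ansatzDefectDeriv c η j i r q b a β α = 0) : α = 0 ∧ β = 0 := by
  have hsum : ∀ g : Fin n → ℝ,
      ∑ k, ansatzSymbol 0 i j q r 0 α β k * g k = α i * g q + β j * g r := by
    intro g
    simp [ansatzSymbol_zero (η := 0) rfl rfl hqi hqj hri hrj, add_mul, Finset.sum_add_distrib,
      Pi.single_apply]
  have hvj := congrFun hv j
  have hwi := congrFun hw i
  simp only [ansatzDefectDeriv, ansatzSymbol_swap hij, hsum, Ne.symm hij, hij, if_true,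
    if_false, zero_add, Pi.zero_apply] at hvj hwi
  -- `(α_i, β_j)` solves a 2 × 2 system whose determinant is nonzero by `hdet`
  have hαi : α i = 0 := by
    have : α i * (c j q i * c i r j - c i q j * c j r i) = 0 := by
      linear_combination c i r j * hvj - c j r i * hwi
    exact (mul_eq_zero.1 this).resolve_right (sub_ne_zero.2 fun h => hdet (by linarith))
  have hβj : β j = 0 := by
    have : β j * (c i q j * c j r i - c j q i * c i r j) = 0 := by
      linear_combination c i q j * hvj - c j q i * hwi
    exact (mul_eq_zero.1 this).resolve_right (sub_ne_zero.2 hdet)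
  have hξ' : ansatzSymbol 0 i j q r 0 α β = 0 := by
    simp [ansatzSymbol_zero (η := 0) rfl rfl hqi hqj hri hrj, hαi, hβj]
  have hξ : ∀ m, m ≠ i → m ≠ j → ansatzSymbol η i j q r 0 a b m = η m := by
    intro m hmi hmj
    simp [ansatzSymbol, hmi, hmj, ha, hb]
  have hv' := congrFun hv
  have hw' := congrFun hw
  simp only [ansatzDefectDeriv, ansatzSymbol_swap hij, hξ', Pi.zero_apply, zero_mul,
    Finset.sum_const_zero, add_zero] at hv' hw'
  refine ⟨funext fun m => ?_, funext fun m => ?_⟩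
  · by_cases hmi : m = i
    · subst hmi; exact hαi
    by_cases hmj : m = j
    · subst hmj; simpa using hv' i
    simpa [hmi, hmj, hξ m hmi hmj, hne m hmi hmj] using hv' m
  · by_cases hmj : m = j
    · subst hmj; exact hβj
    by_cases hmi : m = i
    · subst hmi; simpa using hw' j
    simpa [hmi, hmj, hξ m hmi hmj, hne m hmi hmj] using hw' m

theorem exists_ansatzSystem_eq_zero (hij : i ≠ j) (hηi : η i = 0) (hηj : η j = 0)
    (hηv : ∑ k, η k * c j k i = 0) (hηw : ∑ k, η k * c i k j = 0)
    (hne : ∀ m, m ≠ i → m ≠ j → η m ≠ 0) (hqr : q ≠ r) (hqi : q ≠ i) (hqj : q ≠ j)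
    (hri : r ≠ i) (hrj : r ≠ j) (hdet : c i q j * c j r i ≠ c j q i * c i r j) :
    ∃ T > (0 : ℝ), ∀ t : ℝ, 0 < t → t < T →
      ∃ a b : Fin n → ℝ, ansatzSystem c η i j q r (t, a, b) = 0 ∧
        ansatzSymbol η i j q r t a b ≠ 0 := by
  obtain ⟨a₀, ha₀, hA⟩ := exists_ansatzDefect_zero_eq_zero hij hηi hηj hηv hne hqi hqj hri hrj
  obtain ⟨b₀, hb₀, hB⟩ := exists_ansatzDefect_zero_eq_zero (Ne.symm hij) hηj hηi hηw
    (fun m hmj hmi => hne m hmi hmj) hrj hri hqj hqi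
  set u : ℝ × (Fin n → ℝ) × (Fin n → ℝ) := (0, a₀, b₀)
  set f := ansatzSystem c η i j q r
  have hfu : f u = 0 := Prod.ext (hA b₀ hb₀) (hB a₀ ha₀)
  have hf : HasStrictFDerivAt f (fderiv ℝ f u) u :=
    contDiff_ansatzSystem.contDiffAt.hasStrictFDerivAt one_ne_zero
  have hinj : Function.Injective (fderiv ℝ f u ∘L .inr ℝ ℝ ((Fin n → ℝ) × (Fin n → ℝ))) := by
    rw [injective_iff_map_eq_zero]
    rintro ⟨α, β⟩ h
    have hline : HasDerivAt (fun s : ℝ => u + s • ((0 : ℝ), α, β)) (0, α, β) 0 := by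
      simpa using ((hasDerivAt_id (0 : ℝ)).smul_const ((0 : ℝ), α, β)).const_add u
    have h₁ := hf.hasFDerivAt.comp_hasDerivAt_of_eq 0 hline (by simp)
    have h₂ : HasDerivAt (fun s : ℝ => f (u + s • ((0 : ℝ), α, β)))
        (ansatzDefectDeriv c η i j q r a₀ b₀ α β, ansatzDefectDeriv c η j i r q b₀ a₀ β α) 0 := by
      simpa [f, ansatzSystem, u] using (hasDerivAt_ansatzDefect_line c η i j q r a₀ b₀ α β).prodMk
        (hasDerivAt_ansatzDefect_line c η j i r q b₀ a₀ β α)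
    have h₃ := h₂.unique h₁
    simp only [ContinuousLinearMap.comp_apply, ContinuousLinearMap.inr_apply] at h
    rw [h, Prod.mk_eq_zero] at h₃
    obtain ⟨rfl, rfl⟩ :=
      eq_zero_of_ansatzDefectDeriv_eq_zero hij hne hqi hqj hri hrj hdet ha₀ hb₀ h₃.1 h₃.2
    rfl
  -- a neighbourhood of `(a₀, b₀)` on which `ξ_q = η_q + a_i` cannot vanish
  have hU : {x : (Fin n → ℝ) × (Fin n → ℝ) | |x.1 i| < |η q|} ∈ 𝓝 u.2 :=
    (isOpen_lt (by fun_prop) continuous_const).mem_nhds (by simpa [u, ha₀] using hne q hqi hqj)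
  obtain ⟨T, hT, hsol⟩ := Metric.eventually_nhds_iff.1
    (hf.eventually_exists_mem_apply_eq_zero hfu hinj hU)
  refine ⟨T, hT, fun t ht htT => ?_⟩
  obtain ⟨⟨a, b⟩, hx, hsys⟩ := hsol (y := t) (by
    rw [show u.1 = 0 from rfl, Real.dist_eq, sub_zero, abs_of_pos ht]; exact htT)
  refine ⟨a, b, hsys, fun h => ?_⟩
  have hq := congrFun h q
  simp only [ansatzSymbol, hqi, hqj, hqr, if_false, if_true, add_zero, Pi.zero_apply] at hq
  simp [eq_neg_of_add_eq_zero_right hq] at hx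

end Ansatz

/- `η` is the limit as `t → 0` of the singular covectors; the two sums are the entries
`P(η, c)_{ji}` and `P(η, c)_{ij}`. -/
theorem exists_limit_direction {n : ℕ} (hn : 5 ≤ n) {c : Fin n → Fin n → Fin n → ℝ}
    {i j : Fin n} (hC1 : ∀ k l : Fin n, k ≠ l → k ≠ i → k ≠ j → l ≠ i → l ≠ j →
      c i k j * c j l i ≠ c j k i * c i l j) :
    ∃ η : Fin n → ℝ, (η i = 0 ∧ η j = 0 ∧ ∑ k, η k * c j k i = 0 ∧ ∑ k, η k * c i k j = 0) ∧
      ∀ p, p ≠ i → p ≠ j → η p ≠ 0 := by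
  let M : Matrix (Fin 4) (Fin n) ℝ :=
    Matrix.of ![Pi.single i 1, Pi.single j 1, fun k => c j k i, fun k => c i k j]
  have hM : ∀ η, M *ᵥ η = 0 ↔
      η i = 0 ∧ η j = 0 ∧ ∑ k, η k * c j k i = 0 ∧ ∑ k, η k * c i k j = 0 := by
    intro η
    simp [funext_iff, Fin.forall_fin_succ, M, dotProduct, Pi.single_apply, mul_comm (η _)]
  refine (exists_mulVec_eq_zero_forall_ne_zero M {p | p ≠ i ∧ p ≠ j} ?_).imp
    fun η ⟨hη, hne⟩ => ⟨(hM η).1 hη, fun p hpi hpj => hne p ⟨hpi, hpj⟩⟩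
  rintro p ⟨hpi, hpj⟩
  obtain ⟨q, r, hqr, hq, hr⟩ := Finset.exists_ne_notMem_notMem {i, j, p}
    (by have := Finset.card_le_three (a := i) (b := j) (c := p); rw [Fintype.card_fin]; omega)
  simp only [Finset.mem_insert, Finset.mem_singleton, not_or] at hq hr
  obtain ⟨w, hF, hG, hwp, hw⟩ := exists_dotProduct_eq_zero_apply_ne_zero
    (fun k => c j k i) (fun k => c i k j) (Ne.symm hq.2.2) (Ne.symm hr.2.2)
    (fun h => hC1 q r hqr hq.1 hq.2.1 hr.1 hr.2.1 (by linarith))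
  refine ⟨w, (hM w).2 ⟨hw i hpi.symm (Ne.symm hq.1) (Ne.symm hr.1),
    hw j hpj.symm (Ne.symm hq.2.1) (Ne.symm hr.2.1), ?_, ?_⟩, hwp⟩
  · simpa only [dotProduct, mul_comm] using hF
  · simpa only [dotProduct, mul_comm] using hG

theorem stmt0_general (n : ℕ) (hn : 5 ≤ n) (c : Fin n → Fin n → Fin n → ℝ)
    (hc : IsParamColl n c) (i j : Fin n) (hij : i ≠ j)
    (hC1 : ∀ k l : Fin n, k ≠ l → k ≠ i → k ≠ j → l ≠ i → l ≠ j →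
      c i k j * c j l i ≠ c j k i * c i l j) :
    ∃ T > (0 : ℝ), ∀ t : ℝ, 0 < t → t < T →
      ∃ ξ : Fin n → ℝ, ξ ≠ 0 ∧ (pSymb ξ (pScale t c)).rank ≤ n - 2 := by
  obtain ⟨q, r, hqr, hq, hr⟩ := Finset.exists_ne_notMem_notMem {i, j}
    (by have := Finset.card_le_two (a := i) (b := j); rw [Fintype.card_fin]; omega)
  simp only [Finset.mem_insert, Finset.mem_singleton, not_or] at hq hr
  obtain ⟨η, ⟨hηi, hηj, hηv, hηw⟩, hne⟩ := exists_limit_direction hn hC1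
  obtain ⟨T, hT, hsol⟩ := exists_ansatzSystem_eq_zero hij hηi hηj hηv hηw hne hqr hq.1 hq.2
    hr.1 hr.2 (hC1 q r hqr hq.1 hq.2 hr.1 hr.2)
  refine ⟨T, hT, fun t ht htT => ?_⟩
  obtain ⟨a, b, hsys, hξ⟩ := hsol t ht htT
  exact ⟨_, hξ, rank_pSymb_pScale_le_of_ansatzSystem_eq_zero hc.diag_eq hij hsys⟩

theorem stmt0 (n : ℕ) (hn : 5 ≤ n) (c : Fin n → Fin n → Fin n → ℝ)
    (hc : IsParamColl n c) (i j : Fin n) (hij : i ≠ j)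
    (hC1 : ∀ k l : Fin n, k ≠ l → k ≠ i → k ≠ j → l ≠ i → l ≠ j →
      c i k j * c j l i ≠ c j k i * c i l j)
    (hC2 : ∀ p : Fin n, p ≠ i → p ≠ j →
      ∃ k l m : Fin n, k < l ∧ l < m ∧
        k ≠ i ∧ k ≠ j ∧ l ≠ i ∧ l ≠ j ∧ m ≠ i ∧ m ≠ j ∧
        ∀ I : Fin n, (I = i ∨ I = j) →
          c p k I * (c i l j * c j m i - c j l i * c i m j)
            + c p l I * (c j k i * c i m j - c i k j * c j m i)
            + c p m I * (c i k j * c j l i - c j k i * c i l j) ≠ 0) :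
    ∃ T > (0 : ℝ), ∀ t : ℝ, 0 < t → t < T →
      ∃ ξ : Fin n → ℝ, ξ ≠ 0 ∧ (pSymb ξ (pScale t c)).rank ≤ n - 2 :=
  stmt0_general n hn c hc i j hij hC1
end

section
/- Let n ≥ 5 and fix a pair of indices i ≠ j in {1,…,n}. Suppose the parameter collection c satisfies: (C1) c_i^{kj} c_j^{li} ≠ c_j^{ki} c_i^{lj} for all k ≠ l with k,l ∉ {i,j}; and (C2) for every p ∉ {i,j} there exist k < l < m with k,l,m ∉ {i,j} such that for each I ∈ {i,j}, c_p^{kI}(c_i^{lj}c_j^{mi} − c_j^{li}c_i^{mj}) + c_p^{lI}(c_j^{ki}c_i^{mj} − c_i^{kj}c_j^{mi}) + c_p^{mI}(c_i^{kj}c_j^{li} − c_j^{ki}c_i^{lj}) ≠ 0. Then there exists a vector a = (a_1,…,a_n) ∈ ℝ^n with a_i = a_j = 0, with ∏_{k∉{i,j}} a_k ≠ 0, satisfying Σ_{k∉{i,j}} c_i^{kj} a_k = 0 and Σ_{k∉{i,j}} c_j^{ki} a_k = 0, and such that for every p ∉ {i,j} at least one of Σ_{k∉{i,j}} c_p^{ki}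 a_k ≠ 0 or Σ_{k∉{i,j}} c_p^{kj} a_k ≠ 0 holds. -/
open Finset

section CrossVec

variable {ι R : Type*} [CommRing R]

def weightedSum (s : Finset ι) (d : ι → R) : (ι → R) →ₗ[R] R :=
  ∑ t ∈ s, d t • LinearMap.proj t

theorem weightedSum_apply (s : Finset ι) (d a : ι → R) :
    weightedSum s d a = ∑ t ∈ s, d t * a t := by
  simp [weightedSum]

theorem weightedSum_single [DecidableEq ι] {s : Finset ι} (d : ι → R) {k : ι} (hk : k ∈ s) :
    weightedSum s d (Pi.single k 1) = d k := by
  simp [weightedSum_apply, Pi.single_apply, hk]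

def pairMinor (u v : ι → R) (a b : ι) : R :=
  u a * v b - v a * u b

def solutionSpace (s : Finset ι) (u v : ι → R) (i j : ι) : Submodule R (ι → R) :=
  LinearMap.ker (LinearMap.proj i) ⊓ LinearMap.ker (LinearMap.proj j) ⊓
    LinearMap.ker (weightedSum s u) ⊓ LinearMap.ker (weightedSum s v)

theorem mem_solutionSpace {u v : ι → R} {s : Finset ι} {i j : ι} {a : ι → R} :
    a ∈ solutionSpace s u v i j ↔
      a i = 0 ∧ a j = 0 ∧ ∑ t ∈ s, u t * a t = 0 ∧ ∑ t ∈ s, v t * a t = 0 := by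
  simp only [solutionSpace, Submodule.mem_inf, LinearMap.mem_ker, LinearMap.proj_apply,
    weightedSum_apply, and_assoc]

variable [DecidableEq ι]

/-- The cross product of `(u k, u l, u m)` and `(v k, v l, v m)`, placed in coordinates
`k, l, m`. -/
def crossVec (u v : ι → R) (k l m : ι) : ι → R :=
  pairMinor u v l m • Pi.single k 1 + pairMinor u v m k • Pi.single l 1 +
    pairMinor u v k l • Pi.single m 1

variable {u v : ι → R} {k l m : ι}

theorem crossVec_apply_left (hkl : k ≠ l) (hkm : k ≠ m) :
    crossVec u v k l m k = pairMinor u v l m := by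
  simp [crossVec, hkl, hkm]

theorem crossVec_apply_of_notMem {s : Finset ι} (hk : k ∈ s) (hl : l ∈ s) (hm : m ∈ s)
    {t : ι} (ht : t ∉ s) : crossVec u v k l m t = 0 := by
  have : t ≠ k ∧ t ≠ l ∧ t ≠ m := by
    refine ⟨?_, ?_, ?_⟩ <;> rintro rfl <;> contradiction
  simp [crossVec, this]

theorem weightedSum_crossVec {s : Finset ι} (hk : k ∈ s) (hl : l ∈ s) (hm : m ∈ s) (d : ι → R) :
    weightedSum s d (crossVec u v k l m) =
      d k * pairMinor u v l m + d l * pairMinor u v m k + d m * pairMinor u v k l := by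
  simp only [crossVec, map_add, map_smul, weightedSum_single d hk, weightedSum_single d hl,
    weightedSum_single d hm, smul_eq_mul]
  ring

theorem weightedSum_left_crossVec {s : Finset ι} (hk : k ∈ s) (hl : l ∈ s) (hm : m ∈ s) :
    weightedSum s u (crossVec u v k l m) = 0 := by
  rw [weightedSum_crossVec hk hl hm]
  simp only [pairMinor]
  ring

theorem weightedSum_right_crossVec {s : Finset ι} (hk : k ∈ s) (hl : l ∈ s) (hm : m ∈ s) :
    weightedSum s v (crossVec u v k l m) = 0 := by
  rw [weightedSum_crossVec hk hl hm]
  simp only [pairMinor]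
  ring

theorem crossVec_mem_solutionSpace {s : Finset ι} {i j : ι} (hk : k ∈ s) (hl : l ∈ s)
    (hm : m ∈ s) (hi : i ∉ s) (hj : j ∉ s) : crossVec u v k l m ∈ solutionSpace s u v i j := by
  simp only [solutionSpace, Submodule.mem_inf, LinearMap.mem_ker, LinearMap.proj_apply,
    crossVec_apply_of_notMem hk hl hm hi, crossVec_apply_of_notMem hk hl hm hj,
    weightedSum_left_crossVec hk hl hm, weightedSum_right_crossVec hk hl hm, and_self]

end CrossVec

theorem Finset.exists_mem_ne_ne_of_two_lt_card {α : Type*} [DecidableEq α] {s : Finset α}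
    (hs : 2 < #s) (a : α) : ∃ b ∈ s, ∃ c ∈ s, b ≠ c ∧ b ≠ a ∧ c ≠ a := by
  have : 1 < #(s.erase a) := by
    have := pred_card_le_card_erase (s := s) (a := a)
    omega
  obtain ⟨b, hb, c, hc, hbc⟩ := one_lt_card.mp this
  exact ⟨b, mem_of_mem_erase hb, c, mem_of_mem_erase hc, hbc, ne_of_mem_erase hb,
    ne_of_mem_erase hc⟩

theorem stmt3_general (n : ℕ) (hn : 5 ≤ n) (c : Fin n → Fin n → Fin n → ℝ)
    (i j : Fin n) (hij : i ≠ j)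
    (hC1 : ∀ k l : Fin n, k ≠ l → k ≠ i → k ≠ j → l ≠ i → l ≠ j →
      c i k j * c j l i ≠ c j k i * c i l j)
    (hC2 : ∀ p : Fin n, p ≠ i → p ≠ j →
      ∃ k l m : Fin n, k < l ∧ l < m ∧
        k ≠ i ∧ k ≠ j ∧ l ≠ i ∧ l ≠ j ∧ m ≠ i ∧ m ≠ j ∧
        ∀ I : Fin n, (I = i ∨ I = j) →
          c p k I * (c i l j * c j m i - c j l i * c i m j)
            + c p l I * (c j k i * c i m j - c i k j * c j m i)
            + c p m I * (c i k j * c j l i - c j k i * c i l j) ≠ 0) :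
    ∃ a : Fin n → ℝ,
      a i = 0 ∧ a j = 0 ∧
      (∏ k ∈ Finset.univ.filter (fun k => k ≠ i ∧ k ≠ j), a k) ≠ 0 ∧
      (∑ k ∈ Finset.univ.filter (fun k => k ≠ i ∧ k ≠ j), c i k j * a k = 0) ∧
      (∑ k ∈ Finset.univ.filter (fun k => k ≠ i ∧ k ≠ j), c j k i * a k = 0) ∧
      ∀ p : Fin n, p ≠ i → p ≠ j →
        (∑ k ∈ Finset.univ.filter (fun k => k ≠ i ∧ k ≠ j), c p k i * a k ≠ 0) ∨
        (∑ k ∈ Finset.univ.filter (fun k => k ≠ i ∧ k ≠ j), c p k j * a k ≠ 0) := by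
  set S := univ.filter (fun k : Fin n => k ≠ i ∧ k ≠ j)
  have hS : ∀ {k}, k ∈ S ↔ k ≠ i ∧ k ≠ j := by simp [S]
  have hcard : 2 < #S := by
    rw [show S = univ \ {i, j} by ext; simp [S], card_univ_sdiff, Fintype.card_fin, card_pair hij]
    omega
  have crossVec_mem : ∀ {k l m}, k ∈ S → l ∈ S → m ∈ S →
      crossVec (c i · j) (c j · i) k l m ∈ solutionSpace S (c i · j) (c j · i) i j :=
    fun hk hl hm => crossVec_mem_solutionSpace hk hl hm (by simp [S]) (by simp [S])
  let f : S ⊕ S → Module.Dual ℝ (Fin n → ℝ) :=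
    Sum.elim (fun k => LinearMap.proj k.1) (fun p => weightedSum S (c p · i))
  obtain ⟨a, haW, ha⟩ :=
    Module.Dual.exists_forall_mem_ne_zero_of_forall_exists (solutionSpace S _ _ i j) f <| by
    rintro (⟨k, hk⟩ | ⟨p, hp⟩)
    · obtain ⟨l, hl, m, hm, hlm, hlk, hmk⟩ := exists_mem_ne_ne_of_two_lt_card hcard k
      refine ⟨_, crossVec_mem hk hl hm, ?_⟩
      simp only [f, Sum.elim_inl, LinearMap.proj_apply, crossVec_apply_left hlk.symm hmk.symm]
      exact sub_ne_zero.mpr (hC1 l m hlm (hS.1 hl).1 (hS.1 hl).2 (hS.1 hm).1 (hS.1 hm).2)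
    · obtain ⟨k, l, m, -, -, hki, hkj, hli, hlj, hmi, hmj, hC2p⟩ := hC2 p (hS.1 hp).1 (hS.1 hp).2
      have hk : k ∈ S := hS.2 ⟨hki, hkj⟩
      have hl : l ∈ S := hS.2 ⟨hli, hlj⟩
      have hm : m ∈ S := hS.2 ⟨hmi, hmj⟩
      refine ⟨_, crossVec_mem hk hl hm, ?_⟩
      simp only [f, Sum.elim_inr, weightedSum_crossVec hk hl hm, pairMinor]
      convert hC2p i (Or.inl rfl) using 1
      ring
  obtain ⟨hai, haj, hau, hav⟩ := mem_solutionSpace.mp haW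
  refine ⟨a, hai, haj, prod_ne_zero_iff.mpr fun k hk => ha (.inl ⟨k, hk⟩), hau, hav,
    fun p hpi hpj => .inl ?_⟩
  simpa [f, weightedSum_apply] using ha (.inr ⟨p, hS.2 ⟨hpi, hpj⟩⟩)

theorem stmt3 (n : ℕ) (hn : 5 ≤ n) (c : Fin n → Fin n → Fin n → ℝ)
    (hc : IsParamColl n c) (i j : Fin n) (hij : i ≠ j)
    (hC1 : ∀ k l : Fin n, k ≠ l → k ≠ i → k ≠ j → l ≠ i → l ≠ j →
      c i k j * c j l i ≠ c j k i * c i l j)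
    (hC2 : ∀ p : Fin n, p ≠ i → p ≠ j →
      ∃ k l m : Fin n, k < l ∧ l < m ∧
        k ≠ i ∧ k ≠ j ∧ l ≠ i ∧ l ≠ j ∧ m ≠ i ∧ m ≠ j ∧
        ∀ I : Fin n, (I = i ∨ I = j) →
          c p k I * (c i l j * c j m i - c j l i * c i m j)
            + c p l I * (c j k i * c i m j - c i k j * c j m i)
            + c p m I * (c i k j * c j l i - c j k i * c i l j) ≠ 0) :
    ∃ a : Fin n → ℝ,
      a i = 0 ∧ a j = 0 ∧
      (∏ k ∈ Finset.univ.filter (fun k => k ≠ i ∧ k ≠ j), a k) ≠ 0 ∧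
      (∑ k ∈ Finset.univ.filter (fun k => k ≠ i ∧ k ≠ j), c i k j * a k = 0) ∧
      (∑ k ∈ Finset.univ.filter (fun k => k ≠ i ∧ k ≠ j), c j k i * a k = 0) ∧
      ∀ p : Fin n, p ≠ i → p ≠ j →
        (∑ k ∈ Finset.univ.filter (fun k => k ≠ i ∧ k ≠ j), c p k i * a k ≠ 0) ∨
        (∑ k ∈ Finset.univ.filter (fun k => k ≠ i ∧ k ≠ j), c p k j * a k ≠ 0) :=
  stmt3_general n hn c i j hij hC1 hC2
end

section
/- Let n = 4. Suppose the parameter collection c satisfies: (i) for all i ≠ j in {1,2,3,4}, writing {k,l} = {1,2,3,4} \ {i,j}, one has c_j^{ik} c_i^{jl} ≠ c_j^{il} c_i^{jk}; and (ii) the four inequalities c_2^{14}c_4^{13}c_3^{12} ≠ c_4^{12}c_3^{14}c_2^{13}, c_4^{21}c_3^{24}c_1^{23} ≠ c_1^{24}c_4^{23}c_3^{21}, c_4^{31}c_2^{34}c_1^{32} ≠ c_1^{34}c_4^{32}c_2^{31}, and c_2^{41}c_1^{43}c_3^{42} ≠ c_1^{42}c_3^{41}c_2^{43} hold. Then there exists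 T > 0 such that for every t ∈ (0,T), the singular part Σ_sing(tc) is empty; that is, for every ξ ∈ ℝ^4 \ {0} one has rank P(ξ, tc) ≥ 3 (so the characteristic variety Σ(tc) is smooth). -/
open Matrix

/-!
Write `P(ξ, tc) = diag ξ + t B(ξ)` with `B` linear in `ξ`. Rank is invariant under scaling `ξ`,
so by compactness of the unit sphere it suffices that no `(0, ξ)` with `ξ ≠ 0` is a limit of
parameters `(t, ξ')`, `t ≠ 0`, at which `P` has rank at most two.

Pick `p` with `ξ_p ≠ 0`. By Sylvester's identity, rank at most two makes the matrix of pivot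
minors `P_pp P_ij - P_ip P_pj` (`i, j ≠ p`) of rank at most one. Its off-diagonal entries are `t`
times polynomials in `(t, ξ)`, so after dividing by powers of `t` the vanishing `2 × 2` minors
pass to the limit `t = 0`. If `ξ` has a second nonzero coordinate `a`, the limits force the two
remaining coordinates to vanish and `(ξ_p, ξ_a)` into the kernel of a `2 × 2` matrix that is
invertible by (i). If `ξ_p` is the only nonzero coordinate, the limit of the rank-one identity
around the triangle of the other three indices contradicts (ii).
-/

open Filter Topology

section PivotMinor

variable {n K : Type*} [Field K]

def pivotMinor (M : Matrix n n K) (p i j : n) : K :=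
  M p p * M i j - M i p * M p j

lemma det_submatrix_fin_three_eq_zero [Fintype n] {M : Matrix n n K} (hM : M.rank ≤ 2)
    (r c : Fin 3 → n) : (M.submatrix r c).det = 0 := by
  by_contra hdet
  have hfull : (M.submatrix r c).rank = 3 := by
    simpa using rank_of_isUnit _ ((isUnit_iff_isUnit_det _).mpr (Ne.isUnit hdet))
  have := rank_submatrix_le M r c
  omega

/-- Sylvester's determinant identity for `3 × 3` minors through the pivot `p`:
`M p p` times such a minor is a `2 × 2` determinant of pivot minors. -/
theorem pivotMinor_mul_pivotMinor_of_rank_le_two [Fintype n] {M : Matrix n n K} (hM : M.rank ≤ 2)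
    (p i j k l : n) :
    pivotMinor M p i k * pivotMinor M p j l = pivotMinor M p i l * pivotMinor M p j k := by
  have hminor := det_submatrix_fin_three_eq_zero hM ![p, i, j] ![p, k, l]
  rw [det_fin_three] at hminor
  simp only [submatrix_apply, Matrix.cons_val_zero, Matrix.cons_val_one, Matrix.cons_val_two,
    Matrix.head_cons, Matrix.tail_cons] at hminor
  unfold pivotMinor
  linear_combination M p p * hminor

end PivotMinor

section Perturbation

variable {n K : Type*} [DecidableEq n] [Field K] (d : n → K) (B : Matrix n n K) (t : K)

/-- The pivot minor of `diagonal d + t • B` off the diagonal, divided by `t`. -/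
def reducedPivotMinor (p i j : n) : K :=
  (d p + t * B p p) * B i j - t * (B i p * B p j)

lemma pivotMinor_diagonal_add_smul {p i j : n} (hij : i ≠ j) (hip : i ≠ p) (hjp : j ≠ p) :
    pivotMinor (diagonal d + t • B) p i j = t * reducedPivotMinor d B t p i j := by
  simp only [pivotMinor, reducedPivotMinor, Matrix.add_apply, Matrix.smul_apply, smul_eq_mul,
    diagonal_apply_eq, diagonal_apply_ne _ hij, diagonal_apply_ne _ hip,
    diagonal_apply_ne _ hjp.symm, zero_add]
  ring

variable {d B t}

lemma pivotMinor_mul_reducedPivotMinor_of_rank_le_two [Fintype n]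
    (hM : (diagonal d + t • B).rank ≤ 2) (ht : t ≠ 0) {p a u v : n} (hpa : p ≠ a) (hpu : p ≠ u)
    (hpv : p ≠ v) (hau : a ≠ u) (hav : a ≠ v) (huv : u ≠ v) :
    pivotMinor (diagonal d + t • B) p a a * reducedPivotMinor d B t p u v =
      t * (reducedPivotMinor d B t p a v * reducedPivotMinor d B t p u a) := by
  have h := pivotMinor_mul_pivotMinor_of_rank_le_two hM p a u a v
  rw [pivotMinor_diagonal_add_smul d B t huv hpu.symm hpv.symm,
    pivotMinor_diagonal_add_smul d B t hav hpa.symm hpv.symm,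
    pivotMinor_diagonal_add_smul d B t hau.symm hpu.symm hpa.symm] at h
  apply mul_left_cancel₀ ht
  linear_combination h

/-- The pivot minors form a matrix of rank at most one, and a rank-one matrix `(xᵢ yⱼ)` has
equal products of entries along the oriented triangles `q → r → s → q` and `q → s → r → q`. -/
lemma reducedPivotMinor_cyclic_of_rank_le_two [Fintype n] (hM : (diagonal d + t • B).rank ≤ 2)
    (ht : t ≠ 0) {p q r s : n} (hpq : p ≠ q) (hpr : p ≠ r) (hps : p ≠ s) (hqr : q ≠ r)
    (hqs : q ≠ s) (hrs : r ≠ s) :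
    reducedPivotMinor d B t p q r * reducedPivotMinor d B t p r s *
        reducedPivotMinor d B t p s q =
      reducedPivotMinor d B t p q s * reducedPivotMinor d B t p s r *
        reducedPivotMinor d B t p r q := by
  have e1 := pivotMinor_mul_pivotMinor_of_rank_le_two hM p q s r q
  have e2 := pivotMinor_mul_pivotMinor_of_rank_le_two hM p q r q s
  have hS : ∀ {i j}, i ≠ j → i ≠ p → j ≠ p →
      pivotMinor (diagonal d + t • B) p i j = t * reducedPivotMinor d B t p i j :=
    pivotMinor_diagonal_add_smul d B t
  rw [hS hqr hpq.symm hpr.symm, hS hqs.symm hps.symm hpq.symm,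
    hS hrs.symm hps.symm hpr.symm] at e1
  rw [hS hrs hpr.symm hps.symm, hS hqs hpq.symm hps.symm, hS hqr.symm hpr.symm hpq.symm] at e2
  apply mul_left_cancel₀ (pow_ne_zero 3 ht)
  linear_combination (t * reducedPivotMinor d B t p r s) * e1 +
    (t * reducedPivotMinor d B t p s r) * e2

end Perturbation

section Degeneration

variable {n : Type*} [Fintype n] [DecidableEq n] {B : (n → ℝ) → Matrix n n ℝ}

def rankDropSet (B : (n → ℝ) → Matrix n n ℝ) : Set (ℝ × (n → ℝ)) :=
  {z | z.1 ≠ 0 ∧ (diagonal z.2 + z.1 • B z.2).rank ≤ 2}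

lemma eq_zero_of_mem_closure_rankDropSet {F : ℝ × (n → ℝ) → ℝ} (hF : Continuous F)
    (hzero : ∀ z ∈ rankDropSet B, F z = 0) {x : n → ℝ} (hx : (0, x) ∈ closure (rankDropSet B)) :
    F (0, x) = 0 :=
  Set.EqOn.closure hzero hF continuous_const hx

variable {x : n → ℝ}

lemma apply_eq_zero_of_mem_closure_rankDropSet (hB : Continuous B)
    (hx : (0, x) ∈ closure (rankDropSet B)) {p a u : n} (hp : x p ≠ 0) (ha : x a ≠ 0)
    (hpa : p ≠ a) (hpu : p ≠ u) (hau : a ≠ u) : x u = 0 := by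
  have h := eq_zero_of_mem_closure_rankDropSet
    (F := fun z => pivotMinor (diagonal z.2 + z.1 • B z.2) p a a *
        pivotMinor (diagonal z.2 + z.1 • B z.2) p u u -
      pivotMinor (diagonal z.2 + z.1 • B z.2) p a u *
        pivotMinor (diagonal z.2 + z.1 • B z.2) p u a)
    (by unfold pivotMinor; fun_prop)
    (fun z hz => sub_eq_zero.mpr (pivotMinor_mul_pivotMinor_of_rank_le_two hz.2 p a u a u)) hx
  simpa [pivotMinor, diagonal_apply_ne _ hpa, diagonal_apply_ne _ hpu, diagonal_apply_ne _ hau,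
    hp, ha] using h

lemma entry_eq_zero_of_mem_closure_rankDropSet (hB : Continuous B)
    (hx : (0, x) ∈ closure (rankDropSet B)) {p a u v : n} (hp : x p ≠ 0) (ha : x a ≠ 0)
    (hpa : p ≠ a) (hpu : p ≠ u) (hpv : p ≠ v) (hau : a ≠ u) (hav : a ≠ v) (huv : u ≠ v) :
    B x u v = 0 := by
  have h := eq_zero_of_mem_closure_rankDropSet
    (F := fun z => pivotMinor (diagonal z.2 + z.1 • B z.2) p a a *
        reducedPivotMinor z.2 (B z.2) z.1 p u v -
      z.1 * (reducedPivotMinor z.2 (B z.2) z.1 p a v * reducedPivotMinor z.2 (B z.2) z.1 p u a))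
    (by unfold pivotMinor reducedPivotMinor; fun_prop)
    (fun z hz => sub_eq_zero.mpr <|
      pivotMinor_mul_reducedPivotMinor_of_rank_le_two hz.2 hz.1 hpa hpu hpv hau hav huv) hx
  simpa [pivotMinor, reducedPivotMinor, diagonal_apply_ne _ hpa, hp, ha] using h

lemma entry_cyclic_of_mem_closure_rankDropSet (hB : Continuous B)
    (hx : (0, x) ∈ closure (rankDropSet B)) {p q r s : n} (hp : x p ≠ 0) (hpq : p ≠ q)
    (hpr : p ≠ r) (hps : p ≠ s) (hqr : q ≠ r) (hqs : q ≠ s) (hrs : r ≠ s) :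
    B x q r * B x r s * B x s q = B x q s * B x s r * B x r q := by
  have h := eq_zero_of_mem_closure_rankDropSet
    (F := fun z => reducedPivotMinor z.2 (B z.2) z.1 p q r *
        reducedPivotMinor z.2 (B z.2) z.1 p r s * reducedPivotMinor z.2 (B z.2) z.1 p s q -
      reducedPivotMinor z.2 (B z.2) z.1 p q s * reducedPivotMinor z.2 (B z.2) z.1 p s r *
        reducedPivotMinor z.2 (B z.2) z.1 p r q)
    (by unfold reducedPivotMinor; fun_prop)
    (fun z hz => sub_eq_zero.mpr <|
      reducedPivotMinor_cyclic_of_rank_le_two hz.2 hz.1 hpq hpr hps hqr hqs hrs) hx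
  simp only [reducedPivotMinor, zero_mul, add_zero, sub_zero] at h
  apply mul_left_cancel₀ (pow_ne_zero 3 hp)
  linear_combination h

lemma exists_pos_forall_rank_gt_two (hsmul : ∀ (a : ℝ) x, B (a • x) = a • B x)
    (hclosure : ∀ x : n → ℝ, x ≠ 0 → (0, x) ∉ closure (rankDropSet B)) :
    ∃ T > (0 : ℝ), ∀ t : ℝ, 0 < t → t < T →
      ∀ ξ : n → ℝ, ξ ≠ 0 → 2 < (diagonal ξ + t • B ξ).rank := by
  have hlocal : ∀ x ∈ Metric.sphere (0 : n → ℝ) 1, ∀ᶠ z in 𝓝 (0, x), z ∉ rankDropSet B :=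
    fun x hx => not_frequently.mp <| mem_closure_iff_frequently.not.mp <|
      hclosure x (ne_zero_of_mem_unit_sphere ⟨x, hx⟩)
  obtain ⟨T, hT, hball⟩ := Metric.eventually_nhds_iff.mp
    ((isCompact_sphere (0 : n → ℝ) 1).eventually_forall_of_forall_eventually
      (P := fun t x => (t, x) ∉ rankDropSet B) hlocal)
  refine ⟨T, hT, fun t ht htT ξ hξ => ?_⟩
  have hnorm : ‖ξ‖ ≠ 0 := norm_ne_zero_iff.mpr hξ
  have hunit : ‖ξ‖⁻¹ • ξ ∈ Metric.sphere (0 : n → ℝ) 1 := by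
    simpa using norm_smul_inv_norm (𝕜 := ℝ) hξ
  have hgood := hball (y := t) (by rwa [Real.dist_0_eq_abs, abs_of_pos ht]) _ hunit
  have hscale : diagonal ξ + t • B ξ = ‖ξ‖ • (diagonal (‖ξ‖⁻¹ • ξ) + t • B (‖ξ‖⁻¹ • ξ)) := by
    rw [hsmul, diagonal_smul, smul_comm t, ← smul_add, smul_smul, mul_inv_cancel₀ hnorm,
      one_smul]
  rw [hscale, rank_smul_of_mem_nonZeroDivisors _ (mem_nonZeroDivisors_of_ne_zero hnorm)]
  simpa [rankDropSet, ht.ne'] using hgood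

end Degeneration

section ParamColl

variable {n : ℕ} {c : Fin n → Fin n → Fin n → ℝ}

def offDiagPart (c : Fin n → Fin n → Fin n → ℝ) : Fin n → Fin n → Fin n → ℝ :=
  fun i k j => if k = j then 0 else c i k j

lemma pSymb_pScale_s4 (hc : IsParamColl n c) (x : Fin n → ℝ) (t : ℝ) :
    pSymb x (pScale t c) = diagonal x + t • pSymb x (offDiagPart c) := by
  obtain ⟨-, hone, hzero⟩ := hc
  ext i j
  have hterm : ∀ k, x k * pScale t c i k j =
      (if k = j then x j * c i j j else 0) + t * (x k * offDiagPart c i k j) := by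
    intro k
    by_cases hkj : k = j
    · simp [pScale, offDiagPart, hkj]
    · simp only [pScale, offDiagPart, hkj, if_false, zero_add]
      ring
  simp only [pSymb, of_apply, hterm, Finset.sum_add_distrib, Finset.sum_ite_eq',
    ← Finset.mul_sum, Matrix.add_apply, Matrix.smul_apply, smul_eq_mul]
  by_cases hij : i = j
  · simp [hij, hone]
  · simp [hij, hzero i j hij]

lemma pSymb_smul (a : ℝ) (x : Fin n → ℝ) (c : Fin n → Fin n → Fin n → ℝ) :
    pSymb (a • x) c = a • pSymb x c := by
  ext i j
  simp [pSymb, Finset.mul_sum, mul_assoc]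

lemma continuous_pSymb (c : Fin n → Fin n → Fin n → ℝ) : Continuous fun x => pSymb x c := by
  unfold pSymb
  fun_prop

lemma pSymb_offDiagPart_apply_of_eq_zero {x : Fin n → ℝ} {p a j : Fin n} (hpa : p ≠ a)
    (hjp : j ≠ p) (hja : j ≠ a) (hx : ∀ k, k ≠ p → k ≠ a → k ≠ j → x k = 0) (i : Fin n) :
    pSymb x (offDiagPart c) i j = x p * c i p j + x a * c i a j := by
  rw [pSymb, of_apply, Fintype.sum_eq_add p a hpa]
  · simp [offDiagPart, hjp.symm, hja.symm]
  · rintro k ⟨hkp, hka⟩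
    by_cases hkj : k = j
    · simp [offDiagPart, hkj]
    · simp [hx k hkp hka hkj]

lemma pSymb_offDiagPart_apply_of_forall_ne_eq_zero {x : Fin n → ℝ} {p j : Fin n}
    (hjp : j ≠ p) (hx : ∀ k, k ≠ p → x k = 0) (i : Fin n) :
    pSymb x (offDiagPart c) i j = x p * c i p j := by
  rw [pSymb, of_apply, Fintype.sum_eq_single p fun k hkp => by simp [hx k hkp]]
  simp [offDiagPart, hjp.symm]

end ParamColl

section FinFour

variable {c : Fin 4 → Fin 4 → Fin 4 → ℝ}

lemma exists_compl_pair_fin_four : ∀ p a : Fin 4, p ≠ a → ∃ u v : Fin 4,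
    p ≠ u ∧ p ≠ v ∧ a ≠ u ∧ a ≠ v ∧ u ≠ v ∧ ∀ k, k = p ∨ k = a ∨ k = u ∨ k = v := by
  decide

lemma notMem_closure_rankDropSet_of_two_ne_zero (hsym : ∀ i j k : Fin 4, j ≠ k → c i k j = c i j k)
    (h1 : ∀ i j k l : Fin 4, i ≠ j → k ≠ l → k ≠ i → k ≠ j → l ≠ i → l ≠ j →
      c j i k * c i j l ≠ c j i l * c i j k)
    {x : Fin 4 → ℝ} {p a : Fin 4} (hpa : p ≠ a) (hp : x p ≠ 0) (ha : x a ≠ 0) :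
    (0, x) ∉ closure (rankDropSet fun x => pSymb x (offDiagPart c)) := by
  intro hx
  have hB := continuous_pSymb (offDiagPart c)
  obtain ⟨u, v, hpu, hpv, hau, hav, huv, hcover⟩ := exists_compl_pair_fin_four p a hpa
  have hu := apply_eq_zero_of_mem_closure_rankDropSet hB hx hp ha hpa hpu hau
  have hv := apply_eq_zero_of_mem_closure_rankDropSet hB hx hp ha hpa hpv hav
  have hBuv := entry_eq_zero_of_mem_closure_rankDropSet hB hx hp ha hpa hpu hpv hau hav huv
  have hBvu := entry_eq_zero_of_mem_closure_rankDropSet hB hx hp ha hpa hpv hpu hav hau huv.symm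
  have hzero : ∀ w, w = u ∨ w = v → ∀ k, k ≠ p → k ≠ a → k ≠ w → x k = 0 := by
    rintro w hw k hkp hka hkw
    rcases hcover k with rfl | rfl | rfl | rfl <;> simp_all
  rw [pSymb_offDiagPart_apply_of_eq_zero hpa hpv.symm hav.symm (hzero v (.inr rfl))] at hBuv
  rw [pSymb_offDiagPart_apply_of_eq_zero hpa hpu.symm hau.symm (hzero u (.inl rfl))] at hBvu
  apply h1 v u p a huv.symm hpa hpv hpu hav hau
  rw [hsym u p v hpv, hsym v a u hau, hsym u a v hav, hsym v p u hpu]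
  apply mul_left_cancel₀ hp
  linear_combination c v a u * hBuv - c u a v * hBvu

lemma notMem_closure_rankDropSet_of_forall_ne_eq_zero {p q r s : Fin 4} (hpq : p ≠ q)
    (hpr : p ≠ r) (hps : p ≠ s) (hqr : q ≠ r) (hqs : q ≠ s) (hrs : r ≠ s)
    (hcyc : c q p r * c r p s * c s p q ≠ c q p s * c s p r * c r p q)
    {x : Fin 4 → ℝ} (hp : x p ≠ 0) (hx : ∀ k, k ≠ p → x k = 0) :
    (0, x) ∉ closure (rankDropSet fun x => pSymb x (offDiagPart c)) := by
  intro hmem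
  have h := entry_cyclic_of_mem_closure_rankDropSet (continuous_pSymb (offDiagPart c)) hmem hp
    hpq hpr hps hqr hqs hrs
  simp only [pSymb_offDiagPart_apply_of_forall_ne_eq_zero hpq.symm hx,
    pSymb_offDiagPart_apply_of_forall_ne_eq_zero hpr.symm hx,
    pSymb_offDiagPart_apply_of_forall_ne_eq_zero hps.symm hx] at h
  apply hcyc
  apply mul_left_cancel₀ (pow_ne_zero 3 hp)
  linear_combination h

lemma exists_cyclic_ne_of_fin_four
    (h2 : c 1 0 3 * c 3 0 2 * c 2 0 1 ≠ c 3 0 1 * c 2 0 3 * c 1 0 2)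
    (h3 : c 3 1 0 * c 2 1 3 * c 0 1 2 ≠ c 0 1 3 * c 3 1 2 * c 2 1 0)
    (h4 : c 3 2 0 * c 1 2 3 * c 0 2 1 ≠ c 0 2 3 * c 3 2 1 * c 1 2 0)
    (h5 : c 1 3 0 * c 0 3 2 * c 2 3 1 ≠ c 0 3 1 * c 2 3 0 * c 1 3 2) :
    ∀ p : Fin 4, ∃ q r s : Fin 4, p ≠ q ∧ p ≠ r ∧ p ≠ s ∧ q ≠ r ∧ q ≠ s ∧ r ≠ s ∧
      c q p r * c r p s * c s p q ≠ c q p s * c s p r * c r p q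
  | 0 => ⟨1, 3, 2, by decide, by decide, by decide, by decide, by decide, by decide,
      fun h => h2 (by linear_combination h)⟩
  | 1 => ⟨3, 0, 2, by decide, by decide, by decide, by decide, by decide, by decide,
      fun h => h3 (by linear_combination h)⟩
  | 2 => ⟨3, 0, 1, by decide, by decide, by decide, by decide, by decide, by decide,
      fun h => h4 (by linear_combination h)⟩
  | 3 => ⟨1, 0, 2, by decide, by decide, by decide, by decide, by decide, by decide,
      fun h => h5 (by linear_combination h)⟩

lemma notMem_closure_rankDropSet (hsym : ∀ i j k : Fin 4, j ≠ k → c i k j = c i j k)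
    (h1 : ∀ i j k l : Fin 4, i ≠ j → k ≠ l → k ≠ i → k ≠ j → l ≠ i → l ≠ j →
      c j i k * c i j l ≠ c j i l * c i j k)
    (hcyc : ∀ p : Fin 4, ∃ q r s : Fin 4, p ≠ q ∧ p ≠ r ∧ p ≠ s ∧ q ≠ r ∧ q ≠ s ∧ r ≠ s ∧
      c q p r * c r p s * c s p q ≠ c q p s * c s p r * c r p q)
    {x : Fin 4 → ℝ} (hx : x ≠ 0) :
    (0, x) ∉ closure (rankDropSet fun x => pSymb x (offDiagPart c)) := by
  obtain ⟨p, hp⟩ := Function.ne_iff.mp hx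
  by_cases htwo : ∃ a, a ≠ p ∧ x a ≠ 0
  · obtain ⟨a, hap, ha⟩ := htwo
    exact notMem_closure_rankDropSet_of_two_ne_zero hsym h1 hap.symm hp ha
  · push Not at htwo
    obtain ⟨q, r, s, hpq, hpr, hps, hqr, hqs, hrs, hne⟩ := hcyc p
    exact notMem_closure_rankDropSet_of_forall_ne_eq_zero hpq hpr hps hqr hqs hrs hne hp htwo

end FinFour

/-- In the indexing below, the indices 1,2,3,4 of the paper correspond to
`0,1,2,3 : Fin 4`, and `c i k j` denotes `c_i^{kj}`. -/
theorem stmt4 (c : Fin 4 → Fin 4 → Fin 4 → ℝ) (hc : IsParamColl 4 c)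
    (h1 : ∀ i j k l : Fin 4, i ≠ j → k ≠ l → k ≠ i → k ≠ j → l ≠ i → l ≠ j →
      c j i k * c i j l ≠ c j i l * c i j k)
    (h2 : c 1 0 3 * c 3 0 2 * c 2 0 1 ≠ c 3 0 1 * c 2 0 3 * c 1 0 2)
    (h3 : c 3 1 0 * c 2 1 3 * c 0 1 2 ≠ c 0 1 3 * c 3 1 2 * c 2 1 0)
    (h4 : c 3 2 0 * c 1 2 3 * c 0 2 1 ≠ c 0 2 3 * c 3 2 1 * c 1 2 0)
    (h5 : c 1 3 0 * c 0 3 2 * c 2 3 1 ≠ c 0 3 1 * c 2 3 0 * c 1 3 2) :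
    ∃ T > (0 : ℝ), ∀ t : ℝ, 0 < t → t < T →
      ∀ ξ : Fin 4 → ℝ, ξ ≠ 0 → 3 ≤ (pSymb ξ (pScale t c)).rank := by
  obtain ⟨T, hT, hrank⟩ := exists_pos_forall_rank_gt_two
    (fun a x => pSymb_smul a x (offDiagPart c))
    (fun x hx => notMem_closure_rankDropSet hc.1 h1 (exists_cyclic_ne_of_fin_four h2 h3 h4 h5) hx)
  refine ⟨T, hT, fun t ht htT ξ hξ => ?_⟩
  rw [pSymb_pScale_s4 hc]
  exact hrank t ht htT ξ hξ
end

section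
/- Suppose the constants h_ij^μ satisfy the Gauss equations at the origin: R_ijkl(0) = Σ_{μ=1}^{n(n−1)/2} (h_ik^μ h_jl^μ − h_il^μ h_jk^μ) for all 1 ≤ i,j,k,l ≤ n. Then there exist constants α_ijk^l (symmetric in i,j,k) such that the map u defined from these constants satisfies Σ_{m=1}^{n(n+1)/2} ∂_i u^m(x) ∂_j u^m(x) − g_ij(x) = O(|x|^3) as |x| → 0, for all 1 ≤ i,j ≤ n. -/
open Asymptotics

noncomputable section

/-- First partial derivative `∂_k f (x)`. -/
def pder {n : ℕ} (f : (Fin n → ℝ) → ℝ) (k : Fin n) (x : Fin n → ℝ) : ℝ :=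
  fderiv ℝ f x (Pi.single k 1)

/-- Second partial derivative `∂_a ∂_b f` evaluated at the origin. -/
def pder2 {n : ℕ} (f : (Fin n → ℝ) → ℝ) (a b : Fin n) : ℝ :=
  fderiv ℝ (fun x => fderiv ℝ f x (Pi.single b 1)) 0 (Pi.single a 1)

/-- The curvature tensor of `g` at the origin, in normal coordinates:
`R_ijkl(0) = ½(∂_i∂_l g_jk + ∂_j∂_k g_il − ∂_i∂_k g_jl − ∂_j∂_l g_ik)(0)`. -/
def curv0 {n : ℕ} (g : (Fin n → ℝ) → Fin n → Fin n → ℝ) (i j k l : Fin n) : ℝ :=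
  (1 / 2) * (pder2 (fun x => g x j k) i l + pder2 (fun x => g x i l) j k
    - pder2 (fun x => g x j l) i k - pder2 (fun x => g x i k) j l)

/-- The tangential components of `u`:
`u^l(x) = x^l + (1/6) Σ_{i,j,k} α_ijk^l x^i x^j x^k`. -/
def uTan {n : ℕ} (α : Fin n → Fin n → Fin n → Fin n → ℝ) (l : Fin n)
    (x : Fin n → ℝ) : ℝ :=
  x l + (1 / 6) * ∑ i, ∑ j, ∑ k, α i j k l * x i * x j * x k

/-- The normal components of `u`: `u^{n+μ}(x) = ½ Σ_{i,j} h_ij^μ x^i x^j`. -/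
def uNor {n M : ℕ} (h : Fin n → Fin n → Fin M → ℝ) (μ : Fin M)
    (x : Fin n → ℝ) : ℝ :=
  (1 / 2) * ∑ i, ∑ j, h i j μ * x i * x j


noncomputable section

variable {n : ℕ}

abbrev proj' (n : ℕ) (a : Fin n) : (Fin n → ℝ) →L[ℝ] ℝ :=
  ContinuousLinearMap.proj a

/-- extensionality on the Pi basis -/
lemma clm_ext_pi {F : Type*} [NormedAddCommGroup F] [NormedSpace ℝ F]
    {L L' : (Fin n → ℝ) →L[ℝ] F}
    (h : ∀ a, L (Pi.single a 1) = L' (Pi.single a 1)) : L = L' := by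
  apply ContinuousLinearMap.coe_injective
  apply LinearMap.pi_ext
  intro i x
  have hx : (Pi.single i x : Fin n → ℝ) = x • (Pi.single i 1 : Fin n → ℝ) := by
    funext j
    simp [Pi.single_apply]
  rw [hx, map_smul, map_smul]
  exact congrArg _ (h i)

lemma hasFDeriv_mono3 (c : ℝ) (i j k : Fin n) (x : Fin n → ℝ) :
    HasFDerivAt (fun x : Fin n → ℝ => c * x i * x j * x k)
      ((c * (x j * x k)) • proj' n i + (c * (x i * x k)) • proj' n j
        + (c * (x i * x j)) • proj' n k) x := by
  have hi : HasFDerivAt (fun x : Fin n → ℝ => x i) (proj' n i) x :=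
    (proj' n i).hasFDerivAt
  have hj : HasFDerivAt (fun x : Fin n → ℝ => x j) (proj' n j) x :=
    (proj' n j).hasFDerivAt
  have hk : HasFDerivAt (fun x : Fin n → ℝ => x k) (proj' n k) x :=
    (proj' n k).hasFDerivAt
  have h1 := ((hi.const_mul c).mul hj).mul hk
  refine h1.congr_fderiv ?_
  ext v
  simp [ContinuousLinearMap.smul_apply, ContinuousLinearMap.add_apply]
  ring

lemma hasFDeriv_mono2 (c : ℝ) (i j : Fin n) (x : Fin n → ℝ) :
    HasFDerivAt (fun x : Fin n → ℝ => c * x i * x j)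
      ((c * x j) • proj' n i + (c * x i) • proj' n j) x := by
  have hi : HasFDerivAt (fun x : Fin n → ℝ => x i) (proj' n i) x :=
    (proj' n i).hasFDerivAt
  have hj : HasFDerivAt (fun x : Fin n → ℝ => x j) (proj' n j) x :=
    (proj' n j).hasFDerivAt
  have h1 := (hi.const_mul c).mul hj
  refine h1.congr_fderiv ?_
  ext v
  simp [ContinuousLinearMap.smul_apply, ContinuousLinearMap.add_apply]
  ring





lemma pder_uNor {M : ℕ} (h : Fin n → Fin n → Fin M → ℝ)
    (hsymm : ∀ i j μ, h i j μ = h j i μ) (μ : Fin M) (a : Fin n) (x : Fin n → ℝ) :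
    pder (uNor h μ) a x = ∑ b, h a b μ * x b := by
  have hsum : HasFDerivAt (fun x : Fin n → ℝ => ∑ i, ∑ j, h i j μ * x i * x j)
      (∑ i, ∑ j, ((h i j μ * x j) • proj' n i + (h i j μ * x i) • proj' n j)) x :=
    HasFDerivAt.fun_sum fun i _ => HasFDerivAt.fun_sum fun j _ => hasFDeriv_mono2 _ i j x
  have hF : HasFDerivAt (uNor h μ)
      ((1/2 : ℝ) • (∑ i, ∑ j, ((h i j μ * x j) • proj' n i + (h i j μ * x i) • proj' n j))) x :=
    hsum.const_mul _
  rw [pder, hF.fderiv]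
  simp only [ContinuousLinearMap.smul_apply, ContinuousLinearMap.sum_apply,
    ContinuousLinearMap.add_apply, ContinuousLinearMap.proj_apply, smul_eq_mul,
    Pi.single_apply]
  have e1 : ∀ i : Fin n, ∑ j, (h i j μ * x j * (if i = a then (1:ℝ) else 0)
      + h i j μ * x i * (if j = a then (1:ℝ) else 0))
      = (if i = a then (1:ℝ) else 0) * (∑ j, h i j μ * x j) + h i a μ * x i := by
    intro i
    rw [Finset.sum_add_distrib]
    congr 1
    · rw [Finset.mul_sum]; congr 1; funext j; ring
    · rw [Finset.sum_eq_single a]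
      · simp
      · intro b _ hb; simp [hb]
      · intro hb; exact absurd (Finset.mem_univ a) hb
  rw [Finset.sum_congr rfl fun i _ => e1 i, Finset.sum_add_distrib]
  rw [Finset.sum_eq_single a]
  · have : ∑ i, h i a μ * x i = ∑ i, h a i μ * x i :=
      Finset.sum_congr rfl fun i _ => by rw [hsymm]
    rw [this]; simp; ring
  · intro b _ hb; simp [hb]
  · intro hb; exact absurd (Finset.mem_univ a) hb

lemma pder_uTan (α : Fin n → Fin n → Fin n → Fin n → ℝ)
    (hα1 : ∀ i j k l, α i j k l = α j i k l)
    (hα2 : ∀ i j k l, α i j k l = α i k j l)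
    (l : Fin n) (a : Fin n) (x : Fin n → ℝ) :
    pder (uTan α l) a x
      = (if l = a then 1 else 0) + (1/2) * ∑ b, ∑ c, α a b c l * x b * x c := by
  have hsum : HasFDerivAt
      (fun x : Fin n → ℝ => ∑ i, ∑ j, ∑ k, α i j k l * x i * x j * x k)
      (∑ i, ∑ j, ∑ k, ((α i j k l * (x j * x k)) • proj' n i
        + (α i j k l * (x i * x k)) • proj' n j
        + (α i j k l * (x i * x j)) • proj' n k)) x :=
    HasFDerivAt.fun_sum fun i _ => HasFDerivAt.fun_sum fun j _ => HasFDerivAt.fun_sum fun k _ =>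
      hasFDeriv_mono3 _ i j k x
  have hF : HasFDerivAt (uTan α l)
      (proj' n l + (1/6 : ℝ) • (∑ i, ∑ j, ∑ k, ((α i j k l * (x j * x k)) • proj' n i
        + (α i j k l * (x i * x k)) • proj' n j
        + (α i j k l * (x i * x j)) • proj' n k))) x :=
    (proj' n l).hasFDerivAt.add (hsum.const_mul _)
  rw [pder, hF.fderiv]
  simp only [ContinuousLinearMap.add_apply, ContinuousLinearMap.smul_apply,
    ContinuousLinearMap.sum_apply, ContinuousLinearMap.proj_apply, smul_eq_mul,
    Pi.single_apply]
  congr 1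
  -- now handle the sum part
  have collapse : ∀ (f : Fin n → ℝ), (∑ i, (if i = a then (1:ℝ) else 0) * f i) = f a := by
    intro f
    rw [Finset.sum_eq_single a]
    · simp
    · intro b _ hb; simp [hb]
    · intro hb; exact absurd (Finset.mem_univ a) hb
  have e1 : ∀ i j : Fin n, ∑ k : Fin n, (α i j k l * (x j * x k) * (if i = a then (1:ℝ) else 0)
      + α i j k l * (x i * x k) * (if j = a then (1:ℝ) else 0)
      + α i j k l * (x i * x j) * (if k = a then (1:ℝ) else 0))
      = (if i = a then (1:ℝ) else 0) * (∑ k, α i j k l * x j * x k)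
        + (if j = a then (1:ℝ) else 0) * (∑ k, α i j k l * x i * x k)
        + α i j a l * x i * x j := by
    intro i j
    rw [Finset.sum_add_distrib, Finset.sum_add_distrib]
    congr 1
    · congr 1
      · rw [Finset.mul_sum]; congr 1; funext k; ring
      · rw [Finset.mul_sum]; congr 1; funext k; ring
    · rw [Finset.sum_eq_single a]
      · simp; ring
      · intro b _ hb; simp [hb]
      · intro hb; exact absurd (Finset.mem_univ a) hb
  have e2 : ∀ i : Fin n, ∑ j : Fin n,
      ((if i = a then (1:ℝ) else 0) * (∑ k, α i j k l * x j * x k)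
        + (if j = a then (1:ℝ) else 0) * (∑ k, α i j k l * x i * x k)
        + α i j a l * x i * x j)
      = (if i = a then (1:ℝ) else 0) * (∑ j, ∑ k, α i j k l * x j * x k)
        + (∑ k, α i a k l * x i * x k) + ∑ j, α i j a l * x i * x j := by
    intro i
    rw [Finset.sum_add_distrib, Finset.sum_add_distrib, collapse]
    congr 2
    rw [Finset.mul_sum]
  calc (1:ℝ)/6 * ∑ i, ∑ j, ∑ k, (α i j k l * (x j * x k) * (if i = a then (1:ℝ) else 0)
      + α i j k l * (x i * x k) * (if j = a then (1:ℝ) else 0)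
      + α i j k l * (x i * x j) * (if k = a then (1:ℝ) else 0))
      = (1:ℝ)/6 * ((∑ j, ∑ k, α a j k l * x j * x k)
        + (∑ i, ∑ k, α i a k l * x i * x k) + (∑ i, ∑ j, α i j a l * x i * x j)) := by
        congr 1
        have e3 : ∀ i : Fin n, ∑ j : Fin n, ∑ k : Fin n,
            (α i j k l * (x j * x k) * (if i = a then (1:ℝ) else 0)
              + α i j k l * (x i * x k) * (if j = a then (1:ℝ) else 0)
              + α i j k l * (x i * x j) * (if k = a then (1:ℝ) else 0))
            = (if i = a then (1:ℝ) else 0) * (∑ j, ∑ k, α i j k l * x j * x k)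
              + (∑ k, α i a k l * x i * x k) + ∑ j, α i j a l * x i * x j :=
          fun i => (Finset.sum_congr rfl fun j _ => e1 i j).trans (e2 i)
        rw [Finset.sum_congr rfl fun i _ => e3 i, Finset.sum_add_distrib,
          Finset.sum_add_distrib, collapse]
    _ = (1:ℝ)/2 * ∑ b, ∑ c, α a b c l * x b * x c := by
        have s2 : (∑ i, ∑ k, α i a k l * x i * x k) = ∑ b, ∑ c, α a b c l * x b * x c := by
          apply Finset.sum_congr rfl; intro i _
          apply Finset.sum_congr rfl; intro k _
          rw [hα1]
        have s3 : (∑ i, ∑ j, α i j a l * x i * x j) = ∑ b, ∑ c, α a b c l * x b * x c := by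
          apply Finset.sum_congr rfl; intro i _
          apply Finset.sum_congr rfl; intro j _
          rw [hα2 i j a l, hα1 i a j l]
        rw [s2, s3]
        ring

lemma jet3 {E F : Type*} [NormedAddCommGroup E] [NormedSpace ℝ E] [ProperSpace E]
    [NormedAddCommGroup F] [NormedSpace ℝ F]
    (f : E → F) (Ω : Set E) (hΩ : IsOpen Ω) (h0 : (0:E) ∈ Ω)
    (hf : ContDiffOn ℝ (⊤ : ℕ∞) f Ω) (hf0 : f 0 = 0)
    (hf1 : fderiv ℝ f 0 = 0) (hf2 : fderiv ℝ (fderiv ℝ f) 0 = 0) :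
    f =O[nhds 0] fun x => ‖x‖ ^ 3 := by
  obtain ⟨ε, hε, hball⟩ := Metric.mem_nhds_iff.1 (hΩ.mem_nhds h0)
  set r : ℝ := ε / 2 with hr
  have hrpos : 0 < r := by positivity
  have hcb : Metric.closedBall (0:E) r ⊆ Ω := by
    refine (Metric.closedBall_subset_ball ?_).trans hball
    simp [hr]; linarith
  set f1 := fderiv ℝ f with hf1d
  set f2 := fderiv ℝ f1 with hf2d
  letI : NormedAddCommGroup (E →L[ℝ] E →L[ℝ] F) := inferInstance
  letI : NormedSpace ℝ (E →L[ℝ] E →L[ℝ] F) := inferInstance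
  have h1 : ContDiffOn ℝ (⊤ : ℕ∞) f1 Ω := hf.fderiv_of_isOpen hΩ (by simp)
  have h2 : ContDiffOn ℝ (⊤ : ℕ∞) f2 Ω := h1.fderiv_of_isOpen hΩ (by simp)
  have h3cont : ContinuousOn (fderiv ℝ f2) Ω := h2.continuousOn_fderiv_of_isOpen hΩ (by simp)
  obtain ⟨C, hC⟩ := (isCompact_closedBall (0:E) r).exists_bound_of_continuousOn
    (h3cont.mono hcb)
  set C' := max C 0 with hC'
  have hC'0 : 0 ≤ C' := le_max_right _ _
  have hC' : ∀ y ∈ Metric.closedBall (0:E) r, ‖fderiv ℝ f2 y‖ ≤ C' :=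
    fun y hy => (hC y hy).trans (le_max_left _ _)
  have dAf : ∀ y ∈ Ω, DifferentiableAt ℝ f y :=
    fun y hy => (hf.differentiableOn (by simp)).differentiableAt (hΩ.mem_nhds hy)
  have dA1 : ∀ y ∈ Ω, DifferentiableAt ℝ f1 y :=
    fun y hy => (h1.differentiableOn (by simp)).differentiableAt (hΩ.mem_nhds hy)
  have dA2 : ∀ y ∈ Ω, DifferentiableAt ℝ f2 y :=
    fun y hy => (h2.differentiableOn (by simp)).differentiableAt (hΩ.mem_nhds hy)
  -- step A
  have stepA : ∀ x ∈ Metric.closedBall (0:E) r, ‖f2 x‖ ≤ C' * ‖x‖ := by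
    intro x hx
    have h20 : f2 0 = 0 := hf2
    have := (convex_closedBall (0:E) r).norm_image_sub_le_of_norm_fderiv_le
      (fun y hy => dA2 y (hcb hy)) hC' (Metric.mem_closedBall_self hrpos.le) hx
    rw [h20, sub_zero, sub_zero] at this
    exact this
  -- step B
  have stepB : ∀ x ∈ Metric.closedBall (0:E) r, ‖f1 x‖ ≤ C' * ‖x‖ ^ 2 := by
    intro x hx
    have hxr : ‖x‖ ≤ r := by simpa [Metric.mem_closedBall, dist_zero_right] using hx
    have hsub : Metric.closedBall (0:E) ‖x‖ ⊆ Metric.closedBall (0:E) r :=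
      Metric.closedBall_subset_closedBall hxr
    have hb : ∀ y ∈ Metric.closedBall (0:E) ‖x‖, ‖fderiv ℝ f1 y‖ ≤ C' * ‖x‖ := by
      intro y hy
      have hyx : ‖y‖ ≤ ‖x‖ := by simpa [Metric.mem_closedBall, dist_zero_right] using hy
      calc ‖fderiv ℝ f1 y‖ = ‖f2 y‖ := by rw [hf2d]
        _ ≤ C' * ‖y‖ := stepA y (hsub hy)
        _ ≤ C' * ‖x‖ := by apply mul_le_mul_of_nonneg_left hyx hC'0
    have hxmem : x ∈ Metric.closedBall (0:E) ‖x‖ := by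
      simp [Metric.mem_closedBall, dist_zero_right]
    have := (convex_closedBall (0:E) ‖x‖).norm_image_sub_le_of_norm_fderiv_le
      (fun y hy => dA1 y (hcb (hsub hy))) hb (Metric.mem_closedBall_self (norm_nonneg x))
      hxmem
    have h10 : f1 0 = 0 := hf1
    calc ‖f1 x‖ = ‖f1 x - f1 0‖ := by rw [h10, sub_zero]
      _ ≤ C' * ‖x‖ * ‖x - 0‖ := this
      _ = C' * ‖x‖ ^ 2 := by rw [sub_zero]; ring
  -- step C
  have stepC : ∀ x ∈ Metric.closedBall (0:E) r, ‖f x‖ ≤ C' * ‖x‖ ^ 3 := by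
    intro x hx
    have hxr : ‖x‖ ≤ r := by simpa [Metric.mem_closedBall, dist_zero_right] using hx
    have hsub : Metric.closedBall (0:E) ‖x‖ ⊆ Metric.closedBall (0:E) r :=
      Metric.closedBall_subset_closedBall hxr
    have hb : ∀ y ∈ Metric.closedBall (0:E) ‖x‖, ‖fderiv ℝ f y‖ ≤ C' * ‖x‖ ^ 2 := by
      intro y hy
      have hyx : ‖y‖ ≤ ‖x‖ := by simpa [Metric.mem_closedBall, dist_zero_right] using hy
      calc ‖fderiv ℝ f y‖ = ‖f1 y‖ := by rw [hf1d]
        _ ≤ C' * ‖y‖ ^ 2 := stepB y (hsub hy)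
        _ ≤ C' * ‖x‖ ^ 2 := by
            apply mul_le_mul_of_nonneg_left _ hC'0
            exact pow_le_pow_left₀ (norm_nonneg y) hyx 2
    have hxmem : x ∈ Metric.closedBall (0:E) ‖x‖ := by
      simp [Metric.mem_closedBall, dist_zero_right]
    have := (convex_closedBall (0:E) ‖x‖).norm_image_sub_le_of_norm_fderiv_le
      (fun y hy => dAf y (hcb (hsub hy))) hb (Metric.mem_closedBall_self (norm_nonneg x))
      hxmem
    calc ‖f x‖ = ‖f x - f 0‖ := by rw [hf0, sub_zero]
      _ ≤ C' * ‖x‖ ^ 2 * ‖x - 0‖ := this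
      _ = C' * ‖x‖ ^ 3 := by rw [sub_zero]; ring
  rw [isBigO_iff]
  refine ⟨C', ?_⟩
  filter_upwards [Metric.closedBall_mem_nhds (0:E) hrpos] with x hx
  calc ‖f x‖ ≤ C' * ‖x‖ ^ 3 := stepC x hx
    _ = C' * ‖‖x‖ ^ 3‖ := by rw [Real.norm_of_nonneg (by positivity)]

lemma pder2_eq (f : (Fin n → ℝ) → ℝ) (hd : DifferentiableAt ℝ (fderiv ℝ f) 0)
    (a b : Fin n) :
    pder2 f a b = (fderiv ℝ (fderiv ℝ f) 0) (Pi.single a 1) (Pi.single b 1) := by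
  rw [pder2]
  have := fderiv_clm_apply (c := fderiv ℝ f) (u := fun _ => (Pi.single b 1 : Fin n → ℝ))
    (x := 0) hd (differentiableAt_const _)
  simp only [fderiv_fun_const, Pi.zero_apply, ContinuousLinearMap.comp_zero, zero_add] at this
  rw [this]
  simp [ContinuousLinearMap.flip_apply]

lemma pder2_symm (f : (Fin n → ℝ) → ℝ) (Ω : Set (Fin n → ℝ)) (hΩ : IsOpen Ω)
    (h0 : (0 : Fin n → ℝ) ∈ Ω) (hf : ContDiffOn ℝ (⊤ : ℕ∞) f Ω) (a b : Fin n) :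
    pder2 f a b = pder2 f b a := by
  have h1 : ContDiffOn ℝ (⊤ : ℕ∞) (fderiv ℝ f) Ω := hf.fderiv_of_isOpen hΩ (by simp)
  have hd : DifferentiableAt ℝ (fderiv ℝ f) 0 :=
    (h1.differentiableOn (by simp)).differentiableAt (hΩ.mem_nhds h0)
  have hev : ∀ᶠ y in nhds (0 : Fin n → ℝ), HasFDerivAt f (fderiv ℝ f y) y := by
    filter_upwards [hΩ.mem_nhds h0] with y hy
    exact ((hf.differentiableOn (by simp)).differentiableAt (hΩ.mem_nhds hy)).hasFDerivAt
  have hsymm := second_derivative_symmetric_of_eventually hev hd.hasFDerivAt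
    (Pi.single a 1) (Pi.single b 1)
  rw [pder2_eq f hd, pder2_eq f hd, hsymm]

lemma pder2_congr (f₁ f₂ : (Fin n → ℝ) → ℝ) (Ω : Set (Fin n → ℝ)) (hΩ : IsOpen Ω)
    (h0 : (0 : Fin n → ℝ) ∈ Ω) (heq : ∀ x ∈ Ω, f₁ x = f₂ x) (a b : Fin n) :
    pder2 f₁ a b = pder2 f₂ a b := by
  have hev : ∀ x ∈ Ω, fderiv ℝ f₁ x = fderiv ℝ f₂ x := by
    intro x hx
    apply Filter.EventuallyEq.fderiv_eq
    filter_upwards [hΩ.mem_nhds hx] with y hy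
    exact heq y hy
  have hev2 : (fun x => fderiv ℝ f₁ x (Pi.single b 1))
      =ᶠ[nhds (0 : Fin n → ℝ)] fun x => fderiv ℝ f₂ x (Pi.single b 1) := by
    filter_upwards [hΩ.mem_nhds h0] with y hy
    rw [hev y hy]
  rw [pder2, pder2, hev2.fderiv_eq]

def quadCLM (c : Fin n → Fin n → ℝ) : (Fin n → ℝ) →L[ℝ] ((Fin n → ℝ) →L[ℝ] ℝ) :=
  ∑ a, ∑ b, c a b • (((proj' n b).smulRight (proj' n a)) + ((proj' n a).smulRight (proj' n b)))

lemma quadCLM_apply (c : Fin n → Fin n → ℝ) (x v : Fin n → ℝ) :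
    quadCLM c x v = ∑ a, ∑ b, c a b * (x b * v a + x a * v b) := by
  simp only [quadCLM, ContinuousLinearMap.sum_apply, ContinuousLinearMap.smul_apply,
    ContinuousLinearMap.add_apply, ContinuousLinearMap.smulRight_apply,
    ContinuousLinearMap.proj_apply, smul_eq_mul]

lemma hasFDeriv_quad (c : Fin n → Fin n → ℝ) (x : Fin n → ℝ) :
    HasFDerivAt (fun x : Fin n → ℝ => ∑ a, ∑ b, c a b * x a * x b) (quadCLM c x) x := by
  have hsum : HasFDerivAt (fun x : Fin n → ℝ => ∑ a, ∑ b, c a b * x a * x b)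
      (∑ a, ∑ b, ((c a b * x b) • proj' n a + (c a b * x a) • proj' n b)) x :=
    HasFDerivAt.fun_sum fun a _ => HasFDerivAt.fun_sum fun b _ => hasFDeriv_mono2 _ a b x
  convert hsum using 1
  ext v
  rw [quadCLM_apply]
  simp only [ContinuousLinearMap.sum_apply, ContinuousLinearMap.smul_apply,
    ContinuousLinearMap.add_apply, ContinuousLinearMap.proj_apply, smul_eq_mul]
  apply Finset.sum_congr rfl; intro a _
  apply Finset.sum_congr rfl; intro b _
  ring

lemma ite_and_mul (P Q : Prop) [Decidable P] [Decidable Q] (r : ℝ) :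
    (if P ∧ Q then r else 0) = (if P then (1:ℝ) else 0) * (if Q then (1:ℝ) else 0) * r := by
  split_ifs with h1 h2 h3 h4 h5 <;> simp_all <;> tauto

lemma quadCLM_single (c : Fin n → Fin n → ℝ) (a b : Fin n) :
    quadCLM c (Pi.single a 1) (Pi.single b 1) = c b a + c a b := by
  rw [quadCLM_apply]
  have e0 : ∀ p q : Fin n,
      c p q * ((Pi.single a 1 : Fin n → ℝ) q * (Pi.single b 1 : Fin n → ℝ) p
        + (Pi.single a 1 : Fin n → ℝ) p * (Pi.single b 1 : Fin n → ℝ) q)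
      = (if q = a ∧ p = b then c p q else 0) + (if p = a ∧ q = b then c p q else 0) := by
    intro p q
    simp only [Pi.single_apply]
    rw [ite_and_mul, ite_and_mul]
    ring
  rw [Finset.sum_congr rfl fun p _ => Finset.sum_congr rfl fun q _ => e0 p q]
  have esplit : ∀ p : Fin n, ∑ q : Fin n, ((if q = a ∧ p = b then c p q else 0)
      + (if p = a ∧ q = b then c p q else 0))
      = (if p = b then c p a else 0) + (if p = a then c p b else 0) := by
    intro p
    rw [Finset.sum_add_distrib]
    congr 1
    · by_cases h : p = b
      · simp [h, Finset.sum_ite_eq']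
      · simp [h]
    · by_cases h : p = a
      · simp [h, Finset.sum_ite_eq']
      · simp [h]
  rw [Finset.sum_congr rfl fun p _ => esplit p, Finset.sum_add_distrib]
  simp [Finset.sum_ite_eq']

lemma quad_bound (c : Fin n → Fin n → ℝ) (x : Fin n → ℝ) :
    |∑ a, ∑ b, c a b * x a * x b| ≤ (∑ a, ∑ b, |c a b|) * ‖x‖ ^ 2 := by
  calc |∑ a, ∑ b, c a b * x a * x b| ≤ ∑ a, |∑ b, c a b * x a * x b| :=
        Finset.abs_sum_le_sum_abs _ _
    _ ≤ ∑ a, ∑ b, |c a b * x a * x b| :=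
        Finset.sum_le_sum fun a _ => Finset.abs_sum_le_sum_abs _ _
    _ ≤ ∑ a, ∑ b, |c a b| * ‖x‖ ^ 2 := by
        apply Finset.sum_le_sum; intro a _
        apply Finset.sum_le_sum; intro b _
        rw [abs_mul, abs_mul]
        have hxa : |x a| ≤ ‖x‖ := by
          have := norm_le_pi_norm x a
          simpa using this
        have hxb : |x b| ≤ ‖x‖ := by
          have := norm_le_pi_norm x b
          simpa using this
        calc |c a b| * |x a| * |x b| ≤ |c a b| * ‖x‖ * ‖x‖ := by
              apply mul_le_mul (mul_le_mul le_rfl hxa (abs_nonneg _) (abs_nonneg _)) hxb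
                (abs_nonneg _) (by positivity)
          _ = |c a b| * ‖x‖ ^ 2 := by ring
    _ = (∑ a, ∑ b, |c a b|) * ‖x‖ ^ 2 := by
        rw [Finset.sum_mul]
        apply Finset.sum_congr rfl; intro a _
        rw [Finset.sum_mul]

lemma contDiff_quad (c : Fin n → Fin n → ℝ) :
    ContDiff ℝ (⊤ : ℕ∞) (fun x : Fin n → ℝ => ∑ a, ∑ b, c a b * x a * x b) := by
  apply ContDiff.sum; intro a _
  apply ContDiff.sum; intro b _
  exact (contDiff_const.mul (ContinuousLinearMap.proj a : (Fin n → ℝ) →L[ℝ] ℝ).contDiff).mul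
    (ContinuousLinearMap.proj b : (Fin n → ℝ) →L[ℝ] ℝ).contDiff


theorem stmt5 (n : ℕ) (hn : 2 ≤ n)
    (Ω : Set (Fin n → ℝ)) (hΩ : IsOpen Ω) (h0 : (0 : Fin n → ℝ) ∈ Ω)
    (g : (Fin n → ℝ) → Fin n → Fin n → ℝ)
    (hg_smooth : ∀ i j : Fin n, ContDiffOn ℝ (⊤ : ℕ∞) (fun x => g x i j) Ω)
    (hg_symm : ∀ x ∈ Ω, ∀ i j : Fin n, g x i j = g x j i)
    (hg_pos : ∀ x ∈ Ω, (Matrix.of (g x)).PosDef)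
    (hg0 : ∀ i j : Fin n, g 0 i j = if i = j then (1 : ℝ) else 0)
    (hg1 : ∀ i j k : Fin n, pder (fun x => g x i j) k 0 = 0)
    (h : Fin n → Fin n → Fin (n * (n - 1) / 2) → ℝ)
    (hsymm : ∀ i j μ, h i j μ = h j i μ)
    (hGauss : ∀ i j k l : Fin n,
      curv0 g i j k l = ∑ μ, (h i k μ * h j l μ - h i l μ * h j k μ)) :
    ∃ α : Fin n → Fin n → Fin n → Fin n → ℝ,
      (∀ i j k l : Fin n, α i j k l = α j i k l ∧ α i j k l = α i k j l) ∧
      ∀ i j : Fin n,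
        (fun x : Fin n → ℝ =>
            (∑ l, pder (uTan α l) i x * pder (uTan α l) j x)
              + (∑ μ, pder (uNor h μ) i x * pder (uNor h μ) j x) - g x i j)
          =O[nhds 0] (fun x : Fin n → ℝ => ‖x‖ ^ 3) := by
  classical
  set K : Fin n → Fin n → Fin n → Fin n → ℝ := fun i j a b =>
    pder2 (fun x => g x i j) a b - ∑ μ, (h i a μ * h j b μ + h i b μ * h j a μ) with hK
  -- symmetry of second partials
  have hd_ab : ∀ i j a b : Fin n,
      pder2 (fun x => g x i j) a b = pder2 (fun x => g x i j) b a :=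
    fun i j a b => pder2_symm _ Ω hΩ h0 (hg_smooth i j) a b
  have hd_ij : ∀ i j a b : Fin n,
      pder2 (fun x => g x i j) a b = pder2 (fun x => g x j i) a b :=
    fun i j a b => pder2_congr _ _ Ω hΩ h0 (fun x hx => hg_symm x hx i j) a b
  have hK1 : ∀ i j a b, K i j a b = K j i a b := by
    intro i j a b
    rw [hK]
    simp only
    rw [hd_ij i j a b]
    congr 1
    apply Finset.sum_congr rfl; intro μ _
    rw [hsymm i a, hsymm i b, hsymm j a, hsymm j b]
    ring
  have hK2 : ∀ i j a b, K i j a b = K i j b a := by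
    intro i j a b
    rw [hK]
    simp only
    rw [hd_ab i j a b]
    congr 1
    apply Finset.sum_congr rfl; intro μ _
    ring
  have hK3 : ∀ i j a b, K i j a b + K a b i j = K i b a j + K a j i b := by
    intro i j a b
    have hG := hGauss i a b j
    rw [curv0] at hG
    have key : ∑ μ, (2 * (h i b μ * h a j μ - h i j μ * h a b μ)
        - (h i a μ * h j b μ + h i b μ * h j a μ)
        - (h a i μ * h b j μ + h a j μ * h b i μ)
        + (h i a μ * h b j μ + h i j μ * h b a μ)
        + (h a i μ * h j b μ + h a b μ * h j i μ)) = 0 := by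
      apply Finset.sum_eq_zero; intro μ _
      rw [hsymm j a μ, hsymm b j μ, hsymm b i μ, hsymm b a μ, hsymm a i μ, hsymm j i μ]
      ring
    rw [show (∑ μ, (2 * (h i b μ * h a j μ - h i j μ * h a b μ)
        - (h i a μ * h j b μ + h i b μ * h j a μ)
        - (h a i μ * h b j μ + h a j μ * h b i μ)
        + (h i a μ * h b j μ + h i j μ * h b a μ)
        + (h a i μ * h j b μ + h a b μ * h j i μ)))
        = 2 * (∑ μ, (h i b μ * h a j μ - h i j μ * h a b μ))
          - (∑ μ, (h i a μ * h j b μ + h i b μ * h j a μ))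
          - (∑ μ, (h a i μ * h b j μ + h a j μ * h b i μ))
          + (∑ μ, (h i a μ * h b j μ + h i j μ * h b a μ))
          + (∑ μ, (h a i μ * h j b μ + h a b μ * h j i μ)) from by
      rw [Finset.sum_add_distrib, Finset.sum_add_distrib, Finset.sum_sub_distrib,
        Finset.sum_sub_distrib, Finset.mul_sum]] at key
    rw [hK]
    simp only
    linarith [hG, key]
  -- definition of α
  set α : Fin n → Fin n → Fin n → Fin n → ℝ := fun a b c l =>
    (1/3) * (K l a b c + K l b a c + K l c a b)
      - (1/6) * (K b c l a + K a c l b + K a b l c) with hαdef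
  have hαeval : ∀ a b c l, α a b c l = (1/3) * (K l a b c + K l b a c + K l c a b)
      - (1/6) * (K b c l a + K a c l b + K a b l c) := fun _ _ _ _ => rfl
  have hα1 : ∀ i j k l, α i j k l = α j i k l := by
    intro i j k l
    rw [hαeval, hαeval, hK2 l k i j, hK1 i j l k]
    ring
  have hα2 : ∀ i j k l, α i j k l = α i k j l := by
    intro i j k l
    rw [hαeval, hαeval, hK2 l i j k, hK1 j k l i]
    ring
  have hαspec : ∀ i j a b, α i a b j + α j a b i = K i j a b := by
    intro i j a b
    rw [hαeval, hαeval]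
    have e1 := hK1 j i a b
    have e2 := hK2 a b j i
    have e3 := hK3 i j a b
    have e4 := hK3 i a j b
    have e5 := hK2 i b a j
    have e6 := hK1 a j i b
    linear_combination (1/3)*e1 - (1/6)*e2 - (1/3)*e3 + (1/6)*e4 - (1/3)*e5 - (1/3)*e6
  refine ⟨α, fun i j k l => ⟨hα1 i j k l, hα2 i j k l⟩, ?_⟩
  intro i j
  -- quadratic coefficients
  set c : Fin n → Fin n → ℝ := fun a b =>
    (1/2) * (α j a b i + α i a b j) + ∑ μ, h i a μ * h j b μ with hcdef
  set q : Fin n → Fin n → (Fin n → ℝ) → ℝ := fun p l x =>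
    (1/2) * ∑ b, ∑ e, α p b e l * x b * x e with hqdef
  set Gf : (Fin n → ℝ) → ℝ := fun x =>
    ((if i = j then (1:ℝ) else 0) + ∑ a, ∑ b, c a b * x a * x b) - g x i j with hGdef
  set Rf : (Fin n → ℝ) → ℝ := fun x => ∑ l, q i l x * q j l x with hRdef
  -- key identity for coefficients
  have hc2 : ∀ a b, c a b + c b a = pder2 (fun x => g x i j) a b := by
    intro a b
    have hs := hαspec i j a b
    have hKval : K i j a b = pder2 (fun x => g x i j) a b
        - ∑ μ, (h i a μ * h j b μ + h i b μ * h j a μ) := rfl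
    rw [hKval] at hs
    have hsum : (∑ μ, (h i a μ * h j b μ + h i b μ * h j a μ))
        = (∑ μ, h i a μ * h j b μ) + ∑ μ, h i b μ * h j a μ := Finset.sum_add_distrib
    have h1 := hα2 j b a i
    have h2 := hα2 i b a j
    have hcab : c a b = (1/2) * (α j a b i + α i a b j) + ∑ μ, h i a μ * h j b μ := rfl
    have hcba : c b a = (1/2) * (α j b a i + α i b a j) + ∑ μ, h i b μ * h j a μ := rfl
    rw [hcab, hcba]
    linear_combination hs + (1/2)*h1 + (1/2)*h2 - hsum
  -- splitting of the target function
  have hsplit : ∀ x : Fin n → ℝ,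
      (∑ l, pder (uTan α l) i x * pder (uTan α l) j x)
        + (∑ μ, pder (uNor h μ) i x * pder (uNor h μ) j x) - g x i j = Gf x + Rf x := by
    intro x
    have hqe : ∀ p l : Fin n, q p l x = (1/2) * ∑ b, ∑ e, α p b e l * x b * x e :=
      fun p l => rfl
    have hTan : ∀ l : Fin n, pder (uTan α l) i x * pder (uTan α l) j x
        = (if l = i then (1:ℝ) else 0) * (if l = j then (1:ℝ) else 0)
          + ((if l = i then (1:ℝ) else 0) * q j l x
          + ((if l = j then (1:ℝ) else 0) * q i l x + q i l x * q j l x)) := by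
      intro l
      rw [pder_uTan α hα1 hα2 l i x, pder_uTan α hα1 hα2 l j x, hqe, hqe]
      ring
    have s0 : ∑ l : Fin n, (if l = i then (1:ℝ) else 0) * (if l = j then (1:ℝ) else 0)
        = if i = j then (1:ℝ) else 0 := by
      rw [Finset.sum_eq_single i]
      · simp
      · intro b _ hb; simp [hb]
      · intro hb; exact absurd (Finset.mem_univ i) hb
    have s1 : ∑ l : Fin n, (if l = i then (1:ℝ) else 0) * q j l x = q j i x := by
      rw [Finset.sum_eq_single i]
      · simp
      · intro b _ hb; simp [hb]
      · intro hb; exact absurd (Finset.mem_univ i) hb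
    have s2 : ∑ l : Fin n, (if l = j then (1:ℝ) else 0) * q i l x = q i j x := by
      rw [Finset.sum_eq_single j]
      · simp
      · intro b _ hb; simp [hb]
      · intro hb; exact absurd (Finset.mem_univ j) hb
    have hTanSum : (∑ l, pder (uTan α l) i x * pder (uTan α l) j x)
        = (if i = j then (1:ℝ) else 0) + (q j i x + (q i j x + Rf x)) := by
      rw [Finset.sum_congr rfl fun l _ => hTan l, Finset.sum_add_distrib,
        Finset.sum_add_distrib, Finset.sum_add_distrib, s0, s1, s2]
    have hNor : (∑ μ, pder (uNor h μ) i x * pder (uNor h μ) j x)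
        = ∑ a, ∑ b, (∑ μ, h i a μ * h j b μ) * x a * x b := by
      have hN : ∀ μ, pder (uNor h μ) i x * pder (uNor h μ) j x
          = ∑ a, ∑ b, h i a μ * h j b μ * x a * x b := by
        intro μ
        rw [pder_uNor h hsymm μ i x, pder_uNor h hsymm μ j x, Finset.sum_mul_sum]
        apply Finset.sum_congr rfl; intro a _
        apply Finset.sum_congr rfl; intro b _
        ring
      rw [Finset.sum_congr rfl fun μ _ => hN μ, Finset.sum_comm]
      apply Finset.sum_congr rfl; intro a _
      rw [Finset.sum_comm]
      apply Finset.sum_congr rfl; intro b _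
      rw [Finset.sum_mul, Finset.sum_mul]
    have hmerge : q j i x + q i j x + (∑ a, ∑ b, (∑ μ, h i a μ * h j b μ) * x a * x b)
        = ∑ a, ∑ b, c a b * x a * x b := by
      have hcterm : ∀ a b : Fin n, c a b * x a * x b
          = (1/2) * (α j a b i * x a * x b) + ((1/2) * (α i a b j * x a * x b)
            + (∑ μ, h i a μ * h j b μ) * x a * x b) := by
        intro a b
        have : c a b = (1/2) * (α j a b i + α i a b j) + ∑ μ, h i a μ * h j b μ := rfl
        rw [this]; ring
      have hsplit3 : ∀ a : Fin n, ∑ b : Fin n, ((1/2) * (α j a b i * x a * x b)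
          + ((1/2) * (α i a b j * x a * x b) + (∑ μ, h i a μ * h j b μ) * x a * x b))
          = (∑ b, (1/2) * (α j a b i * x a * x b))
            + ((∑ b, (1/2) * (α i a b j * x a * x b))
              + ∑ b, (∑ μ, h i a μ * h j b μ) * x a * x b) := by
        intro a
        rw [Finset.sum_add_distrib, Finset.sum_add_distrib]
      rw [Finset.sum_congr rfl fun a _ => (Finset.sum_congr rfl fun b _ => hcterm a b).trans
        (hsplit3 a), Finset.sum_add_distrib, Finset.sum_add_distrib]
      have m1 : (∑ a : Fin n, ∑ b : Fin n, (1/2) * (α j a b i * x a * x b)) = q j i x := by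
        rw [hqe, Finset.mul_sum]
        apply Finset.sum_congr rfl; intro a _
        rw [Finset.mul_sum]
      have m2 : (∑ a : Fin n, ∑ b : Fin n, (1/2) * (α i a b j * x a * x b)) = q i j x := by
        rw [hqe, Finset.mul_sum]
        apply Finset.sum_congr rfl; intro a _
        rw [Finset.mul_sum]
      rw [m1, m2]
      ring
    have hGfe : Gf x = ((if i = j then (1:ℝ) else 0) + ∑ a, ∑ b, c a b * x a * x b)
        - g x i j := rfl
    have hRfe : Rf x = ∑ l, q i l x * q j l x := rfl
    rw [hTanSum, hNor, hGfe]
    linear_combination hmerge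
  -- the quadratic-minus-g part is O(|x|^3) via the 2-jet lemma
  have hG : Gf =O[nhds 0] fun x : Fin n → ℝ => ‖x‖ ^ 3 := by
    have hGsmooth : ContDiffOn ℝ (⊤ : ℕ∞) Gf Ω := by
      have h1 : ContDiff ℝ (⊤ : ℕ∞) (fun x : Fin n → ℝ =>
          (if i = j then (1:ℝ) else 0) + ∑ a, ∑ b, c a b * x a * x b) :=
        contDiff_const.add (contDiff_quad c)
      exact (h1.contDiffOn).sub (hg_smooth i j)
    have hG0 : Gf 0 = 0 := by
      have : Gf 0 = ((if i = j then (1:ℝ) else 0)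
          + ∑ a, ∑ b, c a b * (0:Fin n → ℝ) a * (0:Fin n → ℝ) b) - g 0 i j := rfl
      rw [this, hg0 i j]
      simp
    have hder : ∀ x ∈ Ω, HasFDerivAt Gf
        (quadCLM c x - fderiv ℝ (fun y => g y i j) x) x := by
      intro x hx
      have hdg : DifferentiableAt ℝ (fun y => g y i j) x :=
        ((hg_smooth i j).differentiableOn (by simp)).differentiableAt (hΩ.mem_nhds hx)
      have h1 := ((hasFDerivAt_const (if i = j then (1:ℝ) else 0) x).add
        (hasFDeriv_quad c x)).sub hdg.hasFDerivAt
      rw [zero_add] at h1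
      exact h1
    have hcd1 : ContDiffOn ℝ (⊤ : ℕ∞) (fderiv ℝ (fun y => g y i j)) Ω :=
      (hg_smooth i j).fderiv_of_isOpen hΩ (by simp)
    have hdg1 : DifferentiableAt ℝ (fderiv ℝ (fun y => g y i j)) 0 :=
      (hcd1.differentiableOn (by simp)).differentiableAt (hΩ.mem_nhds h0)
    have hfd0 : fderiv ℝ (fun y => g y i j) 0 = 0 := by
      apply clm_ext_pi
      intro a
      rw [ContinuousLinearMap.zero_apply]
      exact hg1 i j a
    have hG1 : fderiv ℝ Gf 0 = 0 := by
      rw [(hder 0 h0).fderiv, hfd0, sub_zero, map_zero]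
    have hG2 : fderiv ℝ (fderiv ℝ Gf) 0 = 0 := by
      have hev : fderiv ℝ Gf =ᶠ[nhds (0 : Fin n → ℝ)]
          fun x => quadCLM c x - fderiv ℝ (fun y => g y i j) x := by
        filter_upwards [hΩ.mem_nhds h0] with y hy
        exact (hder y hy).fderiv
      rw [hev.fderiv_eq]
      have hfd2 : fderiv ℝ (fun x => quadCLM c x - fderiv ℝ (fun y => g y i j) x) 0
          = quadCLM c - fderiv ℝ (fderiv ℝ (fun y => g y i j)) 0 :=
        ((quadCLM c).hasFDerivAt.sub hdg1.hasFDerivAt).fderiv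
      rw [hfd2]
      apply clm_ext_pi
      intro a
      rw [ContinuousLinearMap.sub_apply, ContinuousLinearMap.zero_apply, sub_eq_zero]
      apply clm_ext_pi
      intro b
      rw [quadCLM_single]
      rw [show (fderiv ℝ (fderiv ℝ (fun y => g y i j)) 0 (Pi.single a 1)) (Pi.single b 1)
        = pder2 (fun y => g y i j) a b from (pder2_eq _ hdg1 a b).symm]
      have := hc2 a b
      linarith
    exact jet3 Gf Ω hΩ h0 hGsmooth hG0 hG1 hG2
  -- the quartic remainder is O(|x|^3)
  have hR : Rf =O[nhds 0] fun x : Fin n → ℝ => ‖x‖ ^ 3 := by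
    set CC : Fin n → Fin n → ℝ := fun p l => (1/2) * (∑ a, ∑ b, |α p a b l|) with hCC
    have hCCnn : ∀ p l, 0 ≤ CC p l := by
      intro p l
      have : (0:ℝ) ≤ ∑ a, ∑ b, |α p a b l| :=
        Finset.sum_nonneg fun a _ => Finset.sum_nonneg fun b _ => abs_nonneg _
      have e : CC p l = (1/2) * (∑ a, ∑ b, |α p a b l|) := rfl
      rw [e]; linarith
    have hqb : ∀ (p l : Fin n) (x : Fin n → ℝ), |q p l x| ≤ CC p l * ‖x‖ ^ 2 := by
      intro p l x
      have hq : q p l x = (1/2) * ∑ b, ∑ e, α p b e l * x b * x e := rfl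
      have hb := quad_bound (fun a b => α p a b l) x
      have e : CC p l = (1/2) * (∑ a, ∑ b, |α p a b l|) := rfl
      rw [hq, abs_mul, e]
      rw [abs_of_nonneg (by norm_num : (0:ℝ) ≤ (1:ℝ)/2)]
      calc (1/2 : ℝ) * |∑ b, ∑ e, α p b e l * x b * x e|
          ≤ (1/2) * ((∑ a, ∑ b, |α p a b l|) * ‖x‖ ^ 2) := by linarith
        _ = (1/2) * (∑ a, ∑ b, |α p a b l|) * ‖x‖ ^ 2 := by ring
    rw [isBigO_iff]
    refine ⟨∑ l, CC i l * CC j l, ?_⟩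
    filter_upwards [Metric.closedBall_mem_nhds (0 : Fin n → ℝ) one_pos] with x hx
    have hx1 : ‖x‖ ≤ 1 := by simpa [Metric.mem_closedBall, dist_zero_right] using hx
    have hterm : ∀ l : Fin n, |q i l x * q j l x| ≤ CC i l * CC j l * ‖x‖ ^ 3 := by
      intro l
      rw [abs_mul]
      calc |q i l x| * |q j l x| ≤ (CC i l * ‖x‖ ^ 2) * (CC j l * ‖x‖ ^ 2) :=
            mul_le_mul (hqb i l x) (hqb j l x) (abs_nonneg _)
              (mul_nonneg (hCCnn i l) (by positivity))
        _ = CC i l * CC j l * (‖x‖ ^ 3 * ‖x‖) := by ring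
        _ ≤ CC i l * CC j l * (‖x‖ ^ 3 * 1) := by
            apply mul_le_mul_of_nonneg_left _ (mul_nonneg (hCCnn i l) (hCCnn j l))
            exact mul_le_mul_of_nonneg_left hx1 (by positivity)
        _ = CC i l * CC j l * ‖x‖ ^ 3 := by ring
    have hRe : Rf x = ∑ l, q i l x * q j l x := rfl
    rw [Real.norm_eq_abs, hRe]
    calc |∑ l, q i l x * q j l x| ≤ ∑ l, |q i l x * q j l x| :=
          Finset.abs_sum_le_sum_abs _ _
      _ ≤ ∑ l, CC i l * CC j l * ‖x‖ ^ 3 := Finset.sum_le_sum fun l _ => hterm l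
      _ = (∑ l, CC i l * CC j l) * ‖x‖ ^ 3 := by rw [Finset.sum_mul]
      _ = (∑ l, CC i l * CC j l) * ‖(‖x‖ ^ 3 : ℝ)‖ := by
          rw [Real.norm_of_nonneg (by positivity)]
  have heq : (fun x : Fin n → ℝ =>
      (∑ l, pder (uTan α l) i x * pder (uTan α l) j x)
        + (∑ μ, pder (uNor h μ) i x * pder (uNor h μ) j x) - g x i j)
      = fun x => Gf x + Rf x := funext hsplit
  rw [heq]
  exact hG.add hR
end
end
end

section
/- For every n ≥ 3 and every parameter collection c, the characteristic variety Σ(c) is nonempty; that is, there exists ξ ∈ ℝ^n \ {0} with det P(ξ, c) = 0. -/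
/-!
If `det P(ξ, c) ≠ 0` for every `ξ ≠ 0`, then `x ∘ y := P(x, c) y` makes `ℝⁿ` a commutative
algebra without zero divisors, and Hopf's argument bounds its dimension by `2`. The squaring
map `q x = x ∘ x` is proper, a local diffeomorphism away from `0`, and `q x = q y` forces
`y = ± x`, so `q` is a two-sheeted covering of `ℝⁿ ∖ 0` by itself with deck transformation
`x ↦ -x`. A half circle `γ` from `e₁` to `-e₁` maps to a loop `q ∘ γ` lying in an affine plane;
for `n ≥ 3` such a loop can be contracted in `ℝⁿ ∖ 0` along straight segments to a point.
Lifting this contraction, the endpoints of the lifted loops stay antipodal, which is impossible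
once the loop has become constant.
-/

open Matrix

open unitInterval Module Submodule

theorem IsCoveringMap.exists_ne_of_homotopy_of_lift_swap {E X : Type*} [TopologicalSpace E]
    [TopologicalSpace X] {p : E → X} (hp : IsCoveringMap p) {τ : E → E} (hτ : Continuous τ)
    (hpτ : ∀ e, p (τ e) = p e) (hτ_ne : ∀ e, τ e ≠ e) (γ : C(I, E)) (hγ : γ 1 = τ (γ 0))
    (H : C(I × I, X)) (hH₀ : ∀ θ, H (0, θ) = p (γ θ)) (hH_loop : ∀ s, H (s, 1) = H (s, 0)) :
    ∃ θ, H (1, θ) ≠ H (1, 0) := by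
  set L := hp.liftHomotopy H γ hH₀
  have hL : ∀ x, p (L x) = H x := congrFun (hp.liftHomotopy_lifts H γ hH₀)
  have h_swap : (fun s => L (s, 1)) = fun s => τ (L (s, 0)) :=
    hp.eq_of_comp_eq (by fun_prop) (by fun_prop)
      (funext fun s => by simp only [Function.comp_apply, hpτ, hL, hH_loop]) 0
      (by simp only [L, hp.liftHomotopy_zero, hγ])
  by_contra! h_const
  have h_end : L (1, 1) = L (1, 0) :=
    hp.const_of_comp (g := fun θ => L (1, θ)) (by fun_prop)
      (fun a a' => by simp only [hL, h_const]) 1 0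
  exact hτ_ne _ ((congrFun h_swap 1).symm.trans h_end)

theorem Submodule.exists_forall_one_sub_smul_add_smul_ne_zero {K E : Type*} [Field K]
    [AddCommGroup E] [Module K E] {W : Submodule K E} (hW : W ≠ ⊤) {z : E} {S : Set E}
    (hS : ∀ x ∈ S, x - z ∈ W) (h0 : (0 : E) ∉ S) :
    ∃ w, ∀ x ∈ S, ∀ s : K, (1 - s) • x + s • w ≠ 0 := by
  by_cases hz : z ∈ W
  · obtain ⟨u, hu⟩ := SetLike.exists_not_mem_of_ne_top W hW
    refine ⟨u, fun x hx s h => ?_⟩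
    have hxW : x ∈ W := by simpa using W.add_mem (hS x hx) hz
    rcases eq_or_ne s 0 with rfl | hs
    · rw [sub_zero, one_smul, zero_smul, add_zero] at h
      exact h0 (h ▸ hx)
    · refine hu ((W.smul_mem_iff hs).mp ?_)
      rw [eq_neg_of_add_eq_zero_right h]
      exact W.neg_mem (W.smul_mem _ hxW)
  · refine ⟨z, fun x hx s h => hz ?_⟩
    have : z = -((1 - s) • (x - z)) := by
      rw [eq_neg_iff_add_eq_zero, ← h]; module
    rw [this]
    exact W.neg_mem (W.smul_mem _ (hS x hx))

section CommutativeDivision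

variable {V : Type*} [NormedAddCommGroup V] [NormedSpace ℝ V] (B : V →L[ℝ] V →L[ℝ] V)

theorem apply_smul_add_smul_self_of_sq_add_sq (hcomm : ∀ x y, B x y = B y x) {a b : ℝ}
    (hab : a ^ 2 + b ^ 2 = 1) (x y : V) :
    B (a • x + b • y) (a • x + b • y) = B x x + b ^ 2 • (B y y - B x x) + (2 * a * b) • B x y := by
  simp only [map_add, map_smul, _root_.add_apply, _root_.smul_apply, smul_add, hcomm y x]
  linear_combination (norm := module) hab • B x x

theorem eq_or_eq_neg_of_apply_self_eq (hcomm : ∀ x y, B x y = B y x)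
    (hdiv : ∀ x y, B x y = 0 → x = 0 ∨ y = 0) {x y : V} (h : B x x = B y y) :
    x = y ∨ x = -y := by
  have : B (x - y) (x + y) = 0 := by
    simp only [map_sub, map_add, _root_.sub_apply, hcomm y x, h]
    abel
  rcases hdiv _ _ this with h | h
  · exact Or.inl (sub_eq_zero.mp h)
  · exact Or.inr (eq_neg_of_add_eq_zero_left h)

variable [FiniteDimensional ℝ V]

theorem exists_pos_mul_sq_le_norm_apply_self (hdiv : ∀ x y, B x y = 0 → x = 0 ∨ y = 0) :
    ∃ m > 0, ∀ x : V, m * ‖x‖ ^ 2 ≤ ‖B x x‖ := by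
  rcases subsingleton_or_nontrivial V with hV | hV
  · exact ⟨1, one_pos, fun x => by simp [Subsingleton.elim x 0]⟩
  obtain ⟨x₀, hx₀, hmin⟩ := (isCompact_sphere (0 : V) 1).exists_isMinOn
    (NormedSpace.sphere_nonempty.mpr zero_le_one)
    (by fun_prop : Continuous fun x => ‖B x x‖).continuousOn
  have hx₀ : x₀ ≠ 0 := ne_zero_of_mem_unit_sphere ⟨x₀, hx₀⟩
  refine ⟨‖B x₀ x₀‖, norm_pos_iff.mpr fun h => hx₀ ((hdiv _ _ h).elim id id), fun x => ?_⟩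
  rcases eq_or_ne x 0 with rfl | hx
  · simp
  have hu : ‖x‖⁻¹ • x ∈ Metric.sphere (0 : V) 1 := by
    simp [norm_smul, hx]
  have hx' : x = ‖x‖ • ‖x‖⁻¹ • x := by simp [smul_smul, hx]
  calc ‖B x₀ x₀‖ * ‖x‖ ^ 2 ≤ ‖B (‖x‖⁻¹ • x) (‖x‖⁻¹ • x)‖ * ‖x‖ ^ 2 := by
        gcongr; exact hmin hu
    _ = ‖B x x‖ := by
        conv_rhs => rw [hx']
        simp only [map_smul, _root_.smul_apply, norm_smul, norm_norm]
        ring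

theorem isProperMap_apply_self (hdiv : ∀ x y, B x y = 0 → x = 0 ∨ y = 0) :
    IsProperMap fun x => B x x := by
  obtain ⟨m, hm, hlow⟩ := exists_pos_mul_sq_le_norm_apply_self B hdiv
  refine isProperMap_iff_isCompact_preimage.mpr ⟨by fun_prop, fun K hK => ?_⟩
  obtain ⟨R, hR⟩ := hK.isBounded.exists_norm_le
  refine Metric.isCompact_of_isClosed_isBounded (hK.isClosed.preimage (by fun_prop)) ?_
  refine (Metric.isBounded_closedBall (x := (0 : V)) (r := max 1 (R / m))).subset fun x hx => ?_
  rw [mem_closedBall_zero_iff]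
  by_contra! h
  have h1 : 1 < ‖x‖ := (le_max_left _ _).trans_lt h
  have h2 : R < m * ‖x‖ := by rw [← div_lt_iff₀' hm]; exact (le_max_right _ _).trans_lt h
  have h3 : m * ‖x‖ * 1 < m * ‖x‖ * ‖x‖ := by gcongr
  nlinarith [hlow x, hR _ hx]

theorem isLocalHomeomorphOn_apply_self (hcomm : ∀ x y, B x y = B y x)
    (hdiv : ∀ x y, B x y = 0 → x = 0 ∨ y = 0) :
    IsLocalHomeomorphOn (fun x => B x x) {0}ᶜ := by
  refine IsLocalHomeomorphOn.mk _ _ fun x hx => ?_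
  set D : V →L[ℝ] V := B.precompR V x (.id ℝ V) + B.precompL V (.id ℝ V) x
  have hD : HasStrictFDerivAt (fun x => B x x) D x :=
    B.hasStrictFDerivAt_of_bilinear (hasStrictFDerivAt_id x) (hasStrictFDerivAt_id x)
  have hD_inj : Function.Injective D := by
    refine (injective_iff_map_eq_zero D).mpr fun h hh => ?_
    have : (2 : ℝ) • B x h = 0 := by
      rw [two_smul]; nth_rewrite 2 [hcomm]; exact hh
    exact (hdiv x h ((smul_eq_zero.mp this).resolve_left two_ne_zero)).resolve_left hx
  set e := (LinearEquiv.ofInjectiveEndo (D : V →ₗ[ℝ] V) hD_inj).toContinuousLinearEquiv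
  have he : HasStrictFDerivAt (fun x => B x x) (e : V →L[ℝ] V) x := hD
  exact ⟨he.toOpenPartialHomeomorph _, he.mem_toOpenPartialHomeomorph_source, fun _ _ => rfl⟩

theorem isCoveringMapOn_apply_self (hcomm : ∀ x y, B x y = B y x)
    (hdiv : ∀ x y, B x y = 0 → x = 0 ∨ y = 0) :
    IsCoveringMapOn (fun x => B x x) {0}ᶜ := by
  refine (isProperMap_apply_self B hdiv).isClosedMap.isCoveringMapOn_of_isLocalHomeomorphOn
    (fun y _ => ?_) ((isLocalHomeomorphOn_apply_self B hcomm hdiv).mono fun x hx => ?_)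
  · rcases Set.eq_empty_or_nonempty ((fun x => B x x) ⁻¹' {y}) with h | ⟨x, hx⟩
    · simp [h]
    refine (Set.toFinite {x, -x}).subset fun x' hx' => ?_
    exact eq_or_eq_neg_of_apply_self_eq B hcomm hdiv (hx'.trans hx.symm)
  · rintro rfl
    simp at hx

theorem exists_ne_of_homotopy_apply_self (hcomm : ∀ x y, B x y = B y x)
    (hdiv : ∀ x y, B x y = 0 → x = 0 ∨ y = 0) (γ : ℝ → V) (hγ : Continuous γ)
    (hγ_ne : ∀ t, γ t ≠ 0) (hγ₁ : γ 1 = -γ 0) (H : ℝ × ℝ → V) (hH : Continuous H)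
    (hH_ne : ∀ s ∈ I, ∀ t ∈ I, H (s, t) ≠ 0) (hH₀ : ∀ t, H (0, t) = B (γ t) (γ t))
    (hH_loop : ∀ s, H (s, 1) = H (s, 0)) :
    ∃ t ∈ I, H (1, t) ≠ H (1, 0) := by
  have hcov := (isCoveringMapOn_apply_self B hcomm hdiv).isCoveringMap_restrictPreimage
  have hq_ne : ∀ x : V, x ≠ 0 → B x x ≠ 0 := fun x hx h => hx ((hdiv x x h).elim id id)
  obtain ⟨t, ht⟩ := hcov.exists_ne_of_homotopy_of_lift_swap
    (τ := fun e => ⟨-e, by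
      simpa only [Set.mem_preimage, map_neg, _root_.neg_apply, neg_neg] using e.2⟩)
    (by fun_prop) (fun e => Subtype.ext (by simp))
    (fun e h => e.2 (by
      have := IsAddTorsionFree.of_isTorsionFree ℝ V
      simp [neg_eq_self.mp (congrArg Subtype.val h)]))
    ⟨fun t => ⟨γ t, hq_ne _ (hγ_ne t)⟩, by fun_prop⟩ (Subtype.ext (by simpa using hγ₁))
    ⟨fun st => ⟨H (st.1, st.2), hH_ne _ st.1.2 _ st.2.2⟩, by fun_prop⟩
    (fun t => Subtype.ext (by simpa using hH₀ t)) (fun s => Subtype.ext (by simpa using hH_loop s))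
  exact ⟨t, t.2, fun h => ht (Subtype.ext (by simpa using h))⟩

theorem finrank_le_two_of_comm_of_no_zero_divisors (hcomm : ∀ x y, B x y = B y x)
    (hdiv : ∀ x y, B x y = 0 → x = 0 ∨ y = 0) : finrank ℝ V ≤ 2 := by
  by_contra! hV
  have : Nontrivial V := Module.nontrivial_of_finrank_pos (R := ℝ) (by omega)
  obtain ⟨e₁, he₁⟩ := exists_ne (0 : V)
  obtain ⟨e₂, he⟩ := exists_linearIndependent_pair_of_one_lt_finrank (R := ℝ) (by omega) he₁
  set γ : ℝ → V := fun t => Real.cos (Real.pi * t) • e₁ + Real.sin (Real.pi * t) • e₂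
  have hγ_ne : ∀ t, γ t ≠ 0 := fun t h => by
    obtain ⟨hc, hs⟩ := LinearIndependent.pair_iff.mp he _ _ h
    simpa [hc, hs] using Real.sin_sq_add_cos_sq (Real.pi * t)
  set W := span ℝ (Set.range ![B e₂ e₂ - B e₁ e₁, B e₁ e₂])
  have hW : W ≠ ⊤ := fun h => by
    have : finrank ℝ W ≤ 2 := finrank_range_le_card (R := ℝ) ![B e₂ e₂ - B e₁ e₁, B e₁ e₂]
    rw [h, finrank_top] at this
    omega
  have hqγ : ∀ t, B (γ t) (γ t) - B e₁ e₁ ∈ W := fun t => by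
    rw [apply_smul_add_smul_self_of_sq_add_sq B hcomm (Real.cos_sq_add_sin_sq _), add_assoc,
      add_sub_cancel_left]
    exact W.add_mem (W.smul_mem _ (subset_span ⟨0, rfl⟩)) (W.smul_mem _ (subset_span ⟨1, rfl⟩))
  obtain ⟨w, hw⟩ := exists_forall_one_sub_smul_add_smul_ne_zero hW
    (S := Set.range fun t => B (γ t) (γ t)) (Set.forall_mem_range.mpr hqγ)
    fun ⟨t, ht⟩ => hγ_ne t ((hdiv _ _ ht).elim id id)
  obtain ⟨t, -, ht⟩ := exists_ne_of_homotopy_apply_self B hcomm hdiv γ (by fun_prop) hγ_ne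
    (by simp [γ]) (fun st => (1 - st.1) • B (γ st.2) (γ st.2) + st.1 • w) (by fun_prop)
    (fun s _ t _ => hw _ ⟨t, rfl⟩ s) (fun t => by simp) (fun s => by simp [γ])
  simp at ht

end CommutativeDivision

section PrincipalSymbol

variable {n : ℕ}

theorem pSymb_mulVec_apply (ξ η : Fin n → ℝ) (c : Fin n → Fin n → Fin n → ℝ) (i : Fin n) :
    (pSymb ξ c *ᵥ η) i = ∑ j, ∑ k, ξ k * c i k j * η j := by
  simp only [pSymb, mulVec, dotProduct, of_apply, Finset.sum_mul]

theorem pSymb_mulVec_comm {c : Fin n → Fin n → Fin n → ℝ}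
    (hc : ∀ i j k, j ≠ k → c i k j = c i j k) (ξ η : Fin n → ℝ) :
    pSymb ξ c *ᵥ η = pSymb η c *ᵥ ξ := by
  ext i
  rw [pSymb_mulVec_apply, pSymb_mulVec_apply, Finset.sum_comm]
  refine Finset.sum_congr rfl fun k _ => Finset.sum_congr rfl fun j _ => ?_
  rcases eq_or_ne j k with rfl | h
  · ring
  · rw [hc i j k h]; ring

noncomputable def pSymbBilin (c : Fin n → Fin n → Fin n → ℝ) :
    (Fin n → ℝ) →L[ℝ] (Fin n → ℝ) →L[ℝ] (Fin n → ℝ) :=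
  LinearMap.toContinuousLinearMap <| LinearMap.toContinuousLinearMap.toLinearMap ∘ₗ
    LinearMap.mk₂ ℝ (fun ξ η => pSymb ξ c *ᵥ η)
      (fun ξ ξ' η => by ext i; simp [pSymb_mulVec_apply, add_mul, Finset.sum_add_distrib])
      (fun a ξ η => by ext i; simp [pSymb_mulVec_apply, Finset.mul_sum, mul_assoc])
      (fun ξ η η' => by simp [mulVec_add])
      (fun a ξ η => by simp [mulVec_smul])

theorem pSymbBilin_apply (c : Fin n → Fin n → Fin n → ℝ) (ξ η : Fin n → ℝ) :
    pSymbBilin c ξ η = pSymb ξ c *ᵥ η := rfl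

end PrincipalSymbol

theorem stmt7 (n : ℕ) (hn : 3 ≤ n) (c : Fin n → Fin n → Fin n → ℝ)
    (hc : IsParamColl n c) :
    ∃ ξ : Fin n → ℝ, ξ ≠ 0 ∧ (pSymb ξ c).det = 0 := by
  by_contra! hdet
  have hcomm : ∀ ξ η, pSymbBilin c ξ η = pSymbBilin c η ξ := fun ξ η => by
    simp only [pSymbBilin_apply, pSymb_mulVec_comm hc.1 ξ η]
  have hdiv : ∀ ξ η, pSymbBilin c ξ η = 0 → ξ = 0 ∨ η = 0 := fun ξ η h => by
    rw [pSymbBilin_apply] at h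
    by_contra! hne
    exact hdet ξ hne.1 (exists_mulVec_eq_zero_iff.mp ⟨η, hne.2, h⟩)
  have := finrank_le_two_of_comm_of_no_zero_divisors (pSymbBilin c) hcomm hdiv
  rw [finrank_fin_fun] at this
  omega
end

section
/- Let P be an n×n real matrix with n ≥ 2, and for 1 ≤ i,j ≤ n let P^i_j denote the (n−1)×(n−1) minor of P obtained by deleting the i-th row and j-th column. Suppose det P^1_1 = det P^2_2 = det P^1_2 = det P^2_1 = 0, and suppose that every (n−1)×(n−2) submatrix of P (obtained by deleting one row and two columns) and every (n−2)×(n−1) submatrix of P (obtained by deleting two rows and one column) has full rank n−2. Then det P^i_j = 0 for all 1 ≤ i,j ≤ n, i.e., every (n−1)×(n−1) minor of P has zero determinant. -/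
/-!
Fix a column `j` and look at the `(m + 2) × (m + 1)` matrix `A` obtained by deleting it.
A kernel vector `c` of `A` without row `0` and a kernel vector `c'` of `A` without row `1`
both lie in the kernel of the rows `2, …, m + 1`, which is a line by the rank hypothesis;
so they are proportional, and since `c'` kills row `0`, `c` kills all of `A`. Hence every
minor in column `j` vanishes as soon as those in rows `0` and `1` do. Applied to the
columns `0` and `1` this kills the first two minors in every row, and applied to the
transpose it then kills every minor.
-/

namespace Matrix

variable {K : Type*} [Field K]

theorem exists_eq_smul_of_mulVec_eq_zero {m n : Type*} [Fintype n] (A : Matrix m n K)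
    (hA : A.rank + 1 = Fintype.card n) {c c' : n → K} (hc : c ≠ 0)
    (hAc : A *ᵥ c = 0) (hAc' : A *ᵥ c' = 0) : ∃ t : K, c' = t • c := by
  have hker : Module.finrank K (LinearMap.ker A.mulVecLin) = 1 := by
    have := LinearMap.finrank_range_add_finrank_ker A.mulVecLin
    rw [Module.finrank_fintype_fun_eq_card] at this
    change A.rank + _ = _ at this
    omega
  have hspan : Submodule.span K {c} = LinearMap.ker A.mulVecLin := by
    apply Submodule.eq_of_le_of_finrank_le
    · rwa [Submodule.span_singleton_le_iff_mem]
    · rw [hker, finrank_span_singleton hc]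
  obtain ⟨t, ht⟩ := Submodule.mem_span_singleton.mp (hspan ▸ hAc' : c' ∈ Submodule.span K {c})
  exact ⟨t, ht.symm⟩

theorem submatrix_id_mulVec {l m n : Type*} [Fintype n] (A : Matrix m n K) (r : l → m)
    (v : n → K) : A.submatrix r id *ᵥ v = (A *ᵥ v) ∘ r :=
  rfl

theorem det_submatrix_eq_zero_of_mulVec_eq_zero {m n : Type*} [Fintype n] [DecidableEq n]
    (A : Matrix m n K) (r : n → m) {c : n → K} (hc : c ≠ 0) (hAc : A *ᵥ c = 0) :
    (A.submatrix r id).det = 0 :=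
  exists_mulVec_eq_zero_iff.mp ⟨c, hc, by rw [submatrix_id_mulVec, hAc]; rfl⟩

theorem det_submatrix_succAbove_eq_zero {m : ℕ} (A : Matrix (Fin (m + 2)) (Fin (m + 1)) K)
    (h0 : (A.submatrix (Fin.succAbove 0) id).det = 0)
    (h1 : (A.submatrix (Fin.succAbove 1) id).det = 0)
    (hrank : (A.submatrix (Fin.succAbove 0 ∘ Fin.succAbove 0) id).rank = m)
    (i : Fin (m + 2)) : (A.submatrix (Fin.succAbove i) id).det = 0 := by
  obtain ⟨c, hc, hc0⟩ := exists_mulVec_eq_zero_iff.mpr h0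
  obtain ⟨c', hc', hc'1⟩ := exists_mulVec_eq_zero_iff.mpr h1
  have hrows : (Fin.succAbove 0 ∘ Fin.succAbove 0 : Fin m → Fin (m + 2)) =
      Fin.succAbove 1 ∘ Fin.succAbove 0 := by
    funext k
    simp [Fin.succAbove_zero, Fin.succAbove_of_le_castSucc, Fin.le_def]
  have hKc : A.submatrix (Fin.succAbove 0 ∘ Fin.succAbove 0) id *ᵥ c = 0 := by
    rw [submatrix_id_mulVec, ← Function.comp_assoc, ← submatrix_id_mulVec, hc0]; rfl
  have hKc' : A.submatrix (Fin.succAbove 0 ∘ Fin.succAbove 0) id *ᵥ c' = 0 := by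
    rw [hrows, submatrix_id_mulVec, ← Function.comp_assoc, ← submatrix_id_mulVec, hc'1]; rfl
  obtain ⟨t, rfl⟩ := exists_eq_smul_of_mulVec_eq_zero _ (by simpa using hrank) hc hKc hKc'
  have ht : t ≠ 0 := by rintro rfl; exact hc' (zero_smul K c)
  have hAc : A *ᵥ c = 0 := by
    funext r
    induction r using Fin.cases with
    | zero =>
      have h := congrFun hc'1 0
      rw [submatrix_id_mulVec, mulVec_smul] at h
      exact (mul_eq_zero.mp h).resolve_left ht
    | succ k => exact congrFun hc0 k
  exact det_submatrix_eq_zero_of_mulVec_eq_zero A _ hc hAc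

end Matrix

open Matrix

-- Here `n = m + 2`, and rows/columns `1, 2` of the paper are the indices `0, 1`.
/-- here `n = m + 2 ≥ 2`. The minor `P^i_j` (delete row `i`, column `j`)
is `P.submatrix i.succAbove j.succAbove`; rows/columns `1` and `2` of the text are the
indices `0` and `1`. Deleting two columns `j₁, j₂` is parameterized by
`j₁ : Fin (m+2)` and `j₂ : Fin (m+1)` via `j₁.succAbove ∘ j₂.succAbove`, and
similarly for rows. Full rank of an `(m+1) × m` or `m × (m+1)` submatrix means
rank `m = n - 2`. -/
theorem stmt9 (m : ℕ) (P : Matrix (Fin (m + 2)) (Fin (m + 2)) ℝ)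
    (h11 : (P.submatrix (Fin.succAbove 0) (Fin.succAbove 0)).det = 0)
    (h22 : (P.submatrix (Fin.succAbove 1) (Fin.succAbove 1)).det = 0)
    (h12 : (P.submatrix (Fin.succAbove 0) (Fin.succAbove 1)).det = 0)
    (h21 : (P.submatrix (Fin.succAbove 1) (Fin.succAbove 0)).det = 0)
    (hcols : ∀ (i j₁ : Fin (m + 2)) (j₂ : Fin (m + 1)),
      (P.submatrix (Fin.succAbove i) (Fin.succAbove j₁ ∘ Fin.succAbove j₂)).rank = m)
    (hrows : ∀ (i₁ : Fin (m + 2)) (i₂ : Fin (m + 1)) (j : Fin (m + 2)),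
      (P.submatrix (Fin.succAbove i₁ ∘ Fin.succAbove i₂) (Fin.succAbove j)).rank = m) :
    ∀ i j : Fin (m + 2), (P.submatrix (Fin.succAbove i) (Fin.succAbove j)).det = 0 := by
  have hcol (j : Fin (m + 2)) :=
    det_submatrix_succAbove_eq_zero (P.submatrix id (Fin.succAbove j))
  have hcol0 := hcol 0 h11 h21 (hrows 0 0 0)
  have hcol1 := hcol 1 h12 h22 (hrows 0 0 1)
  intro i j
  rw [← det_transpose]
  refine det_submatrix_succAbove_eq_zero (Pᵀ.submatrix id (Fin.succAbove i)) ?_ ?_ ?_ j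
  · exact (det_transpose _).trans (hcol0 i)
  · exact (det_transpose _).trans (hcol1 i)
  · exact (rank_transpose _).trans (hcols i 0 0)
end
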